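/- arXiv:2404.17432 — 6 statements merged into one kernel-verified Lean document; each statement's English description precedes it below -/
import Mathlib

section
/- Every closed interval [x,y] of a shellable finite poset is shellable. -/
/-!
Fix maximal chains `m` of `{z ≤ x}` and `M` of `{z ≥ y}`. The maximal chains of `[x, y]` are
exactly the traces on `[x, y]` of the maximal chains of the whole poset that contain `m ∪ M`. So
`Δ([x, y])` is obtained from the star of the face `m ∪ M` by deleting the vertices of `m ∪ M`
outside `[x, y]`. Restricting a shelling to the facets containing a face `A` and then deleting a
part `C ⊆ A` from each facet gives a shelling again: to shell `σ`, shell `σ ∪ A` and delete `C`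
from the resulting codimension-one face.
-/

namespace KohnertPaper

abbrev Diagram := Finset (ℕ × ℕ)

/-- `D'` is obtained from `D` by a single Kohnert move: the rightmost cell `(r,c)` of row `r`
moves down its column to the first empty position `(r',c)` below it. -/
def KMove (D D' : Diagram) : Prop :=
  ∃ r c r' : ℕ, 1 ≤ r' ∧ r' < r ∧ (r, c) ∈ D ∧
    (∀ c', c < c' → (r, c') ∉ D) ∧
    (r', c) ∉ D ∧
    (∀ r₁, r' < r₁ → r₁ < r → (r₁, c) ∈ D) ∧
    D' = insert (r', c) (D.erase (r, c))

/-- `KReach D T` : `T` is obtainable from `D` by a (possibly empty) sequence of Kohnert moves. -/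
def KReach : Diagram → Diagram → Prop := Relation.ReflTransGen KMove

/-- The underlying set of the Kohnert poset of `D`. -/
def KD (D : Diagram) : Set Diagram := {T | KReach D T}

/-- The order of the Kohnert poset: `X ⪯ Y` iff `X` is obtainable from `Y` by Kohnert moves. -/
def KLe (X Y : Diagram) : Prop := KReach Y X

variable {α : Type*}

/-- A chain of the poset `(P, le)`, i.e. a face of the order complex. -/
def IsPChain (le : α → α → Prop) (P : Set α) (s : Finset α) : Prop :=
  ↑s ⊆ P ∧ ∀ x ∈ s, ∀ y ∈ s, le x y ∨ le y x

/-- A facet of the order complex of `(P, le)`: a maximal chain. -/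
def IsFacet (le : α → α → Prop) (P : Set α) (s : Finset α) : Prop :=
  IsPChain le P s ∧ ∀ t : Finset α, IsPChain le P t → s ⊆ t → s = t

/-- Shellability of the order complex of the poset `(P, le)`: there is an ordering
`F_0, …, F_{t-1}` of all its facets such that for each `k ≥ 1` the complex
`(⋃_{i<k} F̄_i) ∩ F̄_k` is pure of dimension `dim F_k − 1`. -/
def Shellable (le : α → α → Prop) (P : Set α) : Prop :=
  ∃ L : List (Finset α), L.Nodup ∧ (∀ s, IsFacet le P s ↔ s ∈ L) ∧
    ∀ k : Fin L.length, 1 ≤ (k : ℕ) →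
      ∀ σ : Finset α, σ ⊆ L.get k →
        (∃ i : Fin L.length, (i : ℕ) < (k : ℕ) ∧ σ ⊆ L.get i) →
        ∃ τ : Finset α, σ ⊆ τ ∧ τ ⊆ L.get k ∧
          (∃ i : Fin L.length, (i : ℕ) < (k : ℕ) ∧ τ ⊆ L.get i) ∧
          τ.card + 1 = (L.get k).card

/-- A poset is pure if all facets of its order complex have the same cardinality. -/
def Pure (le : α → α → Prop) (P : Set α) : Prop :=
  ∀ s t : Finset α, IsFacet le P s → IsFacet le P t → s.card = t.card

/-- A poset is bounded if it has a unique minimal and a unique maximal element. -/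
def Bounded (le : α → α → Prop) (P : Set α) : Prop :=
  (∃ m ∈ P, ∀ x ∈ P, le m x) ∧ ∃ M ∈ P, ∀ x ∈ P, le x M

/-- `y` covers `x` in the poset `(P, le)`. -/
def CoversIn (le : α → α → Prop) (P : Set α) (x y : α) : Prop :=
  x ∈ P ∧ y ∈ P ∧ le x y ∧ x ≠ y ∧ ∀ z ∈ P, le x z → le z y → z = x ∨ z = y

/-- The closed interval `[x,y]` of `(P, le)`. -/
def intervalSet (le : α → α → Prop) (P : Set α) (x y : α) : Set α :=
  {z ∈ P | le x z ∧ le z y}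

/-- A saturated (maximal) chain of the interval `[x,y]`, recorded as a list going
from `x` up to `y` through covering relations of the interval. -/
def IsSatChain (le : α → α → Prop) (P : Set α) (x y : α) (c : List α) : Prop :=
  c ≠ [] ∧ c.head? = some x ∧ c.getLast? = some y ∧
    List.Chain' (CoversIn le (intervalSet le P x y)) c

/-- The word of edge labels along a chain. -/
def labelWord (lab : α → α → ℤ) (c : List α) : List ℤ :=
  (c.zip c.tail).map fun p => lab p.1 p.2

/-- EL-shellability: there is an integer edge labeling such that every interval `[x,y]`
has a unique rising maximal chain, which is lexicographically strictly smaller than every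
other maximal chain of the interval. -/
def ELShellable (le : α → α → Prop) (P : Set α) : Prop :=
  ∃ lab : α → α → ℤ,
    ∀ x ∈ P, ∀ y ∈ P, le x y →
      ∃ c : List α, IsSatChain le P x y c ∧
        List.Pairwise (· ≤ ·) (labelWord lab c) ∧
        (∀ c', IsSatChain le P x y c' → List.Pairwise (· ≤ ·) (labelWord lab c') → c' = c) ∧
        ∀ c', IsSatChain le P x y c' → c' ≠ c →
          List.Lex (· < ·) (labelWord lab c) (labelWord lab c')

/-- The diagram `H(r₁,r₂;C)`. -/
def hookSeed (r1 r2 : ℕ) (C : Finset ℕ) (hC : C.Nonempty) : Diagram :=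
  C.image (fun c => (r2, c)) ∪ (Finset.Icc r1 r2).image fun j => (j, C.max' hC)

/-- A hook diagram: a diagram obtainable from some `H(r₁,r₂;C)` by Kohnert moves. -/
def IsHookDiagram (D : Diagram) : Prop :=
  ∃ (r1 r2 : ℕ) (C : Finset ℕ) (hC : C.Nonempty),
    1 ≤ r1 ∧ r1 ≤ r2 ∧ (∀ c ∈ C, 1 ≤ c) ∧ KReach (hookSeed r1 r2 C hC) D

/-- The key diagram of the weak composition `(a 1, …, a n)`. -/
def keyDiagram (n : ℕ) (a : ℕ → ℕ) : Diagram :=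
  (Finset.Icc 1 n).biUnion fun i => (Finset.Icc 1 (a i)).image fun j => (i, j)

/-- Number of cells of `T` in row `r`. -/
def rowCount (T : Diagram) (r : ℕ) : ℕ := (T.filter fun p => p.1 = r).card

/-- The Kohnert polynomial of `D` is multiplicity free iff distinct diagrams of `KD(D)`
have distinct weights (row-count vectors). -/
def MultFree (D : Diagram) : Prop :=
  ∀ T1 ∈ KD D, ∀ T2 ∈ KD D, (∀ r, rowCount T1 r = rowCount T2 r) → T1 = T2

/-- The key diagram of a weak composition given as a list. -/
def keyDiagramL (l : List ℕ) : Diagram := keyDiagram l.length fun i => l.getD (i - 1) 0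

section Shelling

variable {α : Type*}

def ShellingStep (l : List (Finset α)) (F : Finset α) : Prop :=
  ∀ σ ⊆ F, (∃ G ∈ l, σ ⊆ G) →
    ∃ τ, σ ⊆ τ ∧ τ ⊆ F ∧ (∃ G ∈ l, τ ⊆ G) ∧ τ.card + 1 = F.card

-- The shelling condition of `Shellable`, with "earlier facets" read off a splitting of the list.
def IsShelling (L : List (Finset α)) : Prop :=
  ∀ l₁ F l₂, L = l₁ ++ F :: l₂ → ShellingStep l₁ F

lemma exists_lt_and_get_iff_exists_mem_take (L : List (Finset α)) (k : Fin L.length)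
    (p : Finset α → Prop) :
    (∃ i : Fin L.length, (i : ℕ) < k ∧ p (L.get i)) ↔ ∃ G ∈ L.take k, p G := by
  simp only [List.mem_take_iff_getElem, List.get_eq_getElem]
  constructor
  · rintro ⟨i, hik, hi⟩
    exact ⟨_, ⟨i, by omega, rfl⟩, hi⟩
  · rintro ⟨_, ⟨i, hi, rfl⟩, hG⟩
    exact ⟨⟨i, by omega⟩, by simp only; omega, hG⟩

lemma isShelling_iff (L : List (Finset α)) :
    IsShelling L ↔ ∀ k : Fin L.length, 1 ≤ (k : ℕ) →
      ∀ σ : Finset α, σ ⊆ L.get k →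
        (∃ i : Fin L.length, (i : ℕ) < (k : ℕ) ∧ σ ⊆ L.get i) →
        ∃ τ : Finset α, σ ⊆ τ ∧ τ ⊆ L.get k ∧
          (∃ i : Fin L.length, (i : ℕ) < (k : ℕ) ∧ τ ⊆ L.get i) ∧
          τ.card + 1 = (L.get k).card := by
  simp only [exists_lt_and_get_iff_exists_mem_take]
  constructor
  · intro h k _
    refine h _ _ (L.drop (k + 1)) ?_
    simp
  · rintro h l₁ F l₂ rfl σ hσ ⟨G, hG, hσG⟩
    have hk : l₁.length < (l₁ ++ F :: l₂).length := by simp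
    simpa using h ⟨l₁.length, hk⟩ (List.length_pos_of_mem hG) σ (by simpa using hσ)
      ⟨G, by simpa using hG, hσG⟩

lemma shellable_iff_exists_isShelling (le : α → α → Prop) (P : Set α) :
    Shellable le P ↔
      ∃ L : List (Finset α), L.Nodup ∧ (∀ s, IsFacet le P s ↔ s ∈ L) ∧ IsShelling L := by
  simp only [Shellable, isShelling_iff]

end Shelling

section Link

variable {α : Type*} [DecidableEq α]

lemma IsShelling.filterMap_sdiff {L : List (Finset α)} (hL : IsShelling L) {A C : Finset α}
    (hCA : C ⊆ A) :
    IsShelling (L.filterMap fun F => if A ⊆ F then some (F \ C) else none) := by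
  intro l₁' F' l₂' hsplit
  obtain ⟨l₁, l₂, rfl, rfl, hl₂⟩ := List.filterMap_eq_append_iff.mp hsplit
  obtain ⟨l₃, F, l₄, rfl, hnone, hF, -⟩ := List.filterMap_eq_cons_iff.mp hl₂
  obtain ⟨hAF, rfl⟩ : A ⊆ F ∧ F \ C = F' := by
    split_ifs at hF with h
    · exact ⟨h, Option.some_injective _ hF⟩
  have hstep : ShellingStep (l₁ ++ l₃) F := hL _ _ l₄ (by simp)
  have mem_image {G : Finset α} (hG : G ∈ l₁ ++ l₃) (hAG : A ⊆ G) :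
      G \ C ∈ l₁.filterMap fun F => if A ⊆ F then some (F \ C) else none := by
    rcases List.mem_append.mp hG with hG | hG
    · exact List.mem_filterMap.mpr ⟨G, hG, by simp [hAG]⟩
    · simpa [hAG] using hnone G hG
  rintro σ hσF ⟨G', hG', hσG'⟩
  obtain ⟨G, hG, hG'eq⟩ := List.mem_filterMap.mp hG'
  obtain ⟨hAG, rfl⟩ : A ⊆ G ∧ G \ C = G' := by
    split_ifs at hG'eq with h
    · exact ⟨h, Option.some_injective _ hG'eq⟩
  obtain ⟨τ, hστ, hτF, ⟨H, hH, hτH⟩, hcard⟩ := hstep (σ ∪ A)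
    (Finset.union_subset (hσF.trans Finset.sdiff_subset) hAF)
    ⟨G, List.mem_append_left _ hG, Finset.union_subset (hσG'.trans Finset.sdiff_subset) hAG⟩
  have hAτ : A ⊆ τ := Finset.subset_union_right.trans hστ
  refine ⟨τ \ C, ?_, Finset.sdiff_subset_sdiff hτF le_rfl,
    ⟨H \ C, mem_image hH (hAτ.trans hτH), Finset.sdiff_subset_sdiff hτH le_rfl⟩, ?_⟩
  · intro z hz
    exact Finset.mem_sdiff.mpr ⟨hστ (Finset.mem_union_left _ hz), (Finset.mem_sdiff.mp (hσF hz)).2⟩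
  · have hCτ : C.card ≤ τ.card := Finset.card_le_card (hCA.trans hAτ)
    rw [Finset.card_sdiff_of_subset (hCA.trans hAτ), Finset.card_sdiff_of_subset (hCA.trans hAF)]
    omega

theorem Shellable.of_isFacet_iff_sdiff {le : α → α → Prop} {P Q : Set α} {A C : Finset α}
    (h : Shellable le P) (hCA : C ⊆ A)
    (hQ : ∀ s, IsFacet le Q s ↔ ∃ F, IsFacet le P F ∧ A ⊆ F ∧ F \ C = s) :
    Shellable le Q := by
  rw [shellable_iff_exists_isShelling] at h ⊢
  obtain ⟨L, hnd, hfac, hL⟩ := h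
  refine ⟨_, hnd.filterMap ?_, fun s => ?_, hL.filterMap_sdiff hCA⟩
  · intro F G s hF hG
    simp only [Option.mem_def, Option.ite_none_right_eq_some, Option.some.injEq] at hF hG
    rw [← Finset.sdiff_union_of_subset (hCA.trans hF.1), hF.2,
      ← Finset.sdiff_union_of_subset (hCA.trans hG.1), hG.2]
  · simp only [hQ, hfac, List.mem_filterMap, Option.ite_none_right_eq_some, Option.some.injEq]

end Link

section Chains

variable {α : Type*}

lemma exists_isFacet [Finite α] (le : α → α → Prop) (P : Set α) : ∃ s, IsFacet le P s := by
  have : Fintype α := Fintype.ofFinite α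
  classical
  obtain ⟨s, hs, hmax⟩ := Finset.exists_max_image
    (Finset.univ.filter fun s : Finset α => IsPChain le P s) Finset.card
    ⟨∅, Finset.mem_filter.mpr ⟨Finset.mem_univ _, by simp [IsPChain]⟩⟩
  simp only [Finset.mem_filter, Finset.mem_univ, true_and] at hs hmax
  exact ⟨s, hs, fun t ht hst => Finset.eq_of_subset_of_card_le hst (hmax t ht)⟩

lemma IsPChain.union {le : α → α → Prop} {P : Set α} [DecidableEq α] {s t : Finset α}
    (hs : IsPChain le P s) (ht : IsPChain le P t) (hst : ∀ a ∈ s, ∀ b ∈ t, le a b) :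
    IsPChain le P (s ∪ t) := by
  refine ⟨by simpa using And.intro hs.1 ht.1, fun a ha b hb => ?_⟩
  rcases Finset.mem_union.mp ha with ha | ha <;> rcases Finset.mem_union.mp hb with hb | hb
  exacts [hs.2 a ha b hb, Or.inl (hst a ha b hb), Or.inr (hst b hb a ha), ht.2 a ha b hb]

lemma IsPChain.filter_mem {le : α → α → Prop} {P : Set α} {s : Finset α} (hs : IsPChain le P s)
    (Q : Set α) [DecidablePred (· ∈ Q)] : IsPChain le Q (s.filter (· ∈ Q)) :=
  ⟨fun _ hz => (Finset.mem_filter.mp hz).2,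
    fun a ha b hb => hs.2 a (Finset.mem_filter.mp ha).1 b (Finset.mem_filter.mp hb).1⟩

end Chains

section PartialOrder

variable {β : Type*} [PartialOrder β]

lemma IsFacet.mem_of_forall_comparable {P : Set β} {s : Finset β} (hs : IsFacet (· ≤ ·) P s)
    {z : β} (hz : z ∈ P) (hcomp : ∀ w ∈ s, z ≤ w ∨ w ≤ z) : z ∈ s := by
  classical
  have hchain : IsPChain (· ≤ ·) P (insert z s) := by
    refine ⟨by simpa using Set.insert_subset hz hs.1.1, fun a ha b hb => ?_⟩
    rcases Finset.mem_insert.mp ha with rfl | has <;> rcases Finset.mem_insert.mp hb with rfl | hbs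
    exacts [Or.inl le_rfl, hcomp b hbs, (hcomp a has).symm, hs.1.2 a has b hbs]
  rw [hs.2 _ hchain (Finset.subset_insert z s)]
  exact Finset.mem_insert_self z s

variable {x y : β} {m M : Finset β}
  (hm : IsFacet (· ≤ ·) (Set.Iic x) m) (hM : IsFacet (· ≤ ·) (Set.Ici y) M)
include hm hM

lemma mem_or_mem_Icc_or_mem {t : Finset β} (ht : IsPChain (· ≤ ·) Set.univ t) (hmt : m ⊆ t)
    (hMt : M ⊆ t) {z : β} (hz : z ∈ t) : z ∈ m ∨ z ∈ Set.Icc x y ∨ z ∈ M := by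
  have hxm : x ∈ m := hm.mem_of_forall_comparable le_rfl fun w hw => Or.inr (hm.1.1 hw)
  have hyM : y ∈ M := hM.mem_of_forall_comparable le_rfl fun w hw => Or.inl (hM.1.1 hw)
  rcases ht.2 z hz x (hmt hxm) with hzx | hxz
  · exact Or.inl (hm.mem_of_forall_comparable hzx fun w hw => ht.2 z hz w (hmt hw))
  rcases ht.2 z hz y (hMt hyM) with hzy | hyz
  · exact Or.inr (Or.inl ⟨hxz, hzy⟩)
  · exact Or.inr (Or.inr (hM.mem_of_forall_comparable hyz fun w hw => ht.2 z hz w (hMt hw)))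

lemma isFacet_union_union_of_isFacet_Icc [DecidableEq β] (hxy : x ≤ y) {s : Finset β}
    (hs : IsFacet (· ≤ ·) (Set.Icc x y) s) : IsFacet (· ≤ ·) Set.univ (m ∪ s ∪ M) := by
  have hchain : IsPChain (· ≤ ·) Set.univ (m ∪ s ∪ M) :=
    (IsPChain.union ⟨Set.subset_univ _, hm.1.2⟩ ⟨Set.subset_univ _, hs.1.2⟩
      fun a ha b hb => le_trans (hm.1.1 ha) (hs.1.1 hb).1).union ⟨Set.subset_univ _, hM.1.2⟩
      fun a ha b hb => by
        rcases Finset.mem_union.mp ha with ha | ha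
        exacts [le_trans (hm.1.1 ha) (hxy.trans (hM.1.1 hb)), le_trans (hs.1.1 ha).2 (hM.1.1 hb)]
  refine ⟨hchain, fun t ht hsub => Finset.Subset.antisymm hsub fun z hz => ?_⟩
  have hmt : m ⊆ t := (Finset.subset_union_left.trans Finset.subset_union_left).trans hsub
  have hMt : M ⊆ t := Finset.subset_union_right.trans hsub
  rcases mem_or_mem_Icc_or_mem hm hM ht hmt hMt hz with h | h | h
  · simp [h]
  · have := hs.mem_of_forall_comparable h fun w hw => ht.2 z hz w (hsub (by simp [hw]))
    simp [this]
  · simp [h]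

lemma isFacet_filter_mem_Icc [DecidableLE β] {F : Finset β} (hF : IsFacet (· ≤ ·) Set.univ F)
    (hmF : m ⊆ F) (hMF : M ⊆ F) : IsFacet (· ≤ ·) (Set.Icc x y) (F.filter (· ∈ Set.Icc x y)) := by
  refine ⟨hF.1.filter_mem _, fun t ht hsub => Finset.Subset.antisymm hsub fun z hz => ?_⟩
  have hzI : z ∈ Set.Icc x y := ht.1 hz
  refine Finset.mem_filter.mpr ⟨hF.mem_of_forall_comparable trivial fun w hw => ?_, hzI⟩
  rcases mem_or_mem_Icc_or_mem hm hM hF.1 hmF hMF hw with h | h | h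
  · exact Or.inr (le_trans (hm.1.1 h) hzI.1)
  · exact ht.2 z hz w (hsub (Finset.mem_filter.mpr ⟨hw, h⟩))
  · exact Or.inl (le_trans hzI.2 (hM.1.1 h))

variable [DecidableEq β] [DecidableLE β]

lemma sdiff_filter_not_mem_Icc {F : Finset β} (hF : IsPChain (· ≤ ·) Set.univ F)
    (hmMF : m ∪ M ⊆ F) :
    F \ (m ∪ M).filter (· ∉ Set.Icc x y) = F.filter (· ∈ Set.Icc x y) := by
  obtain ⟨hmF, hMF⟩ := Finset.union_subset_iff.mp hmMF
  ext z
  simp only [Finset.mem_sdiff, Finset.mem_filter, Finset.mem_union, not_and, not_not]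
  refine and_congr_right fun hz => ⟨fun hC => ?_, fun hI _ => hI⟩
  rcases mem_or_mem_Icc_or_mem hm hM hF hmF hMF hz with h | h | h
  exacts [hC (Or.inl h), h, hC (Or.inr h)]

lemma isFacet_Icc_iff (hxy : x ≤ y) {s : Finset β} :
    IsFacet (· ≤ ·) (Set.Icc x y) s ↔ ∃ F, IsFacet (· ≤ ·) Set.univ F ∧ m ∪ M ⊆ F ∧
      F \ (m ∪ M).filter (· ∉ Set.Icc x y) = s := by
  constructor
  · intro hs
    have hxs : x ∈ s := hs.mem_of_forall_comparable ⟨le_rfl, hxy⟩ fun w hw => Or.inl (hs.1.1 hw).1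
    have hys : y ∈ s := hs.mem_of_forall_comparable ⟨hxy, le_rfl⟩ fun w hw => Or.inr (hs.1.1 hw).2
    have hF := isFacet_union_union_of_isFacet_Icc hm hM hxy hs
    have hmMF : m ∪ M ⊆ m ∪ s ∪ M :=
      Finset.union_subset (Finset.subset_union_left.trans Finset.subset_union_left)
        Finset.subset_union_right
    refine ⟨m ∪ s ∪ M, hF, hmMF, ?_⟩
    rw [sdiff_filter_not_mem_Icc hm hM hF.1 hmMF]
    ext z
    simp only [Finset.mem_filter, Finset.mem_union]
    refine ⟨fun ⟨hz, hI⟩ => ?_, fun hz => ⟨Or.inl (Or.inr hz), hs.1.1 hz⟩⟩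
    rcases hz with (h | h) | h
    · exact le_antisymm (hm.1.1 h) hI.1 ▸ hxs
    · exact h
    · exact le_antisymm hI.2 (hM.1.1 h) ▸ hys
  · rintro ⟨F, hF, hmMF, rfl⟩
    rw [sdiff_filter_not_mem_Icc hm hM hF.1 hmMF]
    obtain ⟨hmF, hMF⟩ := Finset.union_subset_iff.mp hmMF
    exact isFacet_filter_mem_Icc hm hM hF hmF hMF

end PartialOrder

/-- Every closed interval of a shellable finite poset is shellable. -/
theorem stmt_2 {β : Type*} [PartialOrder β] [Finite β]
    (h : Shellable (· ≤ ·) (Set.univ : Set β)) (x y : β) (hxy : x ≤ y) :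
    Shellable (· ≤ ·) {z : β | x ≤ z ∧ z ≤ y} := by
  classical
  obtain ⟨m, hm⟩ := exists_isFacet (· ≤ ·) (Set.Iic x)
  obtain ⟨M, hM⟩ := exists_isFacet (· ≤ ·) (Set.Ici y)
  exact h.of_isFacet_iff_sdiff (Finset.filter_subset _ _) fun s => isFacet_Icc_iff hm hM hxy

end KohnertPaper
end

section
/- Every bounded EL-shellable finite poset is shellable. -/
namespace KohnertPaper

variable {α : Type*}

/-!
Order the maximal chains by the lexicographic order of their label words. Let `G` come before `F`
and let `σ ⊆ F ∩ G`. If `F` had no descent outside `G`, then on every segment between consecutive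
common elements of `F` and `G` it would be the rising chain, hence lexicographically strictly
smaller than `G`; so `F` has a descent at some `x ∉ G`, in particular `x ∉ σ`. Replacing the
descent `a ⋖ x ⋖ b` by the rising chain of `[a, b]` gives a lexicographically smaller, hence
earlier, maximal chain containing `F \ {x}`.
-/

section ListLex

variable {κ : Type*} [LinearOrder κ]

theorem append_lt_append_of_lt_of_not_isPrefix {a b : List κ} (hab : a < b) (hpre : ¬ a <+: b)
    (s t : List κ) : a ++ s < b ++ t := by
  induction (hab : List.Lex (· < ·) a b) with
  | nil => exact absurd List.nil_prefix hpre
  | cons _ ih => exact List.Lex.cons (ih fun hp => hpre (List.prefix_cons_inj _ |>.2 hp))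
  | rel h => exact List.Lex.rel h

theorem isPrefix_of_lt_of_le_append {a b t : List κ} (hab : a < b) (hb : b ≤ a ++ t) :
    a <+: b := by
  induction (hab : List.Lex (· < ·) a b) with
  | nil => exact List.nil_prefix
  | @cons x a b _ ih =>
    exact List.prefix_cons_inj _ |>.2 (ih (not_lt.1 fun h => not_lt.2 hb (List.Lex.cons h)))
  | rel h => exact absurd (List.Lex.rel h) (not_lt.2 hb)

end ListLex

section LabelWord

variable {γ : Type*} (lab : γ → γ → ℤ)

@[simp] theorem labelWord_cons_cons (a b : γ) (l : List γ) :
    labelWord lab (a :: b :: l) = lab a b :: labelWord lab (b :: l) := rfl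

theorem labelWord_append_cons (A : List γ) (s : γ) (B : List γ) :
    labelWord lab (A ++ s :: B) = labelWord lab (A ++ [s]) ++ labelWord lab (s :: B) := by
  induction A with
  | nil => rfl
  | cons a A ih => cases A <;> simp_all

def IsRising (c : List γ) : Prop := (labelWord lab c).IsChain (· ≤ ·)

def HasDescentAt (c : List γ) (x : γ) : Prop :=
  ∃ A a b B, c = A ++ a :: x :: b :: B ∧ lab x b < lab a x

variable {lab}

theorem HasDescentAt.append_left {c : List γ} {x : γ} (h : HasDescentAt lab c x) (p : List γ) :
    HasDescentAt lab (p ++ c) x := by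
  obtain ⟨A, a, b, B, rfl, hlt⟩ := h
  exact ⟨p ++ A, a, b, B, by simp, hlt⟩

theorem HasDescentAt.append_right {c : List γ} {x : γ} (h : HasDescentAt lab c x) (q : List γ) :
    HasDescentAt lab (c ++ q) x := by
  obtain ⟨A, a, b, B, rfl, hlt⟩ := h
  exact ⟨A, a, b, B ++ q, by simp, hlt⟩

theorem HasDescentAt.mem {c : List γ} {x : γ} (h : HasDescentAt lab c x) : x ∈ c := by
  obtain ⟨A, a, b, B, rfl, -⟩ := h
  simp

theorem isRising_of_forall_not_hasDescentAt {c : List γ} (h : ∀ x, ¬ HasDescentAt lab c x) :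
    IsRising lab c := by
  induction c with
  | nil => exact List.IsChain.nil
  | cons a l ih =>
    have ih' := ih fun x hx => h x (hx.append_left [a])
    rcases l with _ | ⟨x, _ | ⟨b, l⟩⟩
    · exact List.IsChain.nil
    · exact List.isChain_singleton _
    · exact List.isChain_cons_cons.2 ⟨not_lt.1 fun hlt => h x ⟨[], a, b, l, rfl, hlt⟩, ih'⟩

end LabelWord

section CovChain

variable {β : Type*} [PartialOrder β]

structure IsCovChain (x y : β) (c : List β) : Prop where
  head?_eq : c.head? = some x
  getLast?_eq : c.getLast? = some y
  isChain : c.IsChain (· ⋖ ·)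

variable {w x y z : β} {c : List β}

theorem isCovChain_singleton_iff : IsCovChain x y [z] ↔ z = x ∧ z = y := by
  constructor
  · rintro ⟨h1, h2, -⟩
    simp_all
  · rintro ⟨rfl, rfl⟩
    exact ⟨rfl, rfl, List.isChain_singleton _⟩

theorem isCovChain_cons_cons_iff {l : List β} :
    IsCovChain x y (w :: z :: l) ↔ w = x ∧ w ⋖ z ∧ IsCovChain z y (z :: l) := by
  constructor
  · rintro ⟨h1, h2, h3⟩
    simp only [List.head?_cons, Option.some.injEq, List.getLast?_cons_cons,
      List.isChain_cons_cons] at h1 h2 h3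
    exact ⟨h1, h3.1, rfl, h2, h3.2⟩
  · rintro ⟨rfl, hwz, h1, h2, h3⟩
    exact ⟨rfl, by simpa using h2, List.isChain_cons_cons.2 ⟨hwz, h3⟩⟩

theorem isCovChain_append_cons_iff {A B : List β} :
    IsCovChain x y (A ++ z :: B) ↔ IsCovChain x z (A ++ [z]) ∧ IsCovChain z y (z :: B) := by
  constructor
  · rintro ⟨h1, h2, h3⟩
    rw [List.isChain_split] at h3
    exact ⟨⟨by simpa using h1, List.getLast?_concat, h3.1⟩, ⟨rfl, by simpa using h2, h3.2⟩⟩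
  · rintro ⟨⟨h1, -, h3⟩, ⟨-, h2, h4⟩⟩
    exact ⟨by simpa using h1, by simpa using h2, List.isChain_split.2 ⟨h3, h4⟩⟩

namespace IsCovChain

theorem exists_eq_cons (h : IsCovChain x y c) : ∃ l, c = x :: l := by
  obtain ⟨hh, -, -⟩ := h
  rcases c with _ | ⟨a, l⟩
  · simp at hh
  · exact ⟨l, by simpa using hh⟩

theorem exists_eq_cons_append (h : IsCovChain x y c)
    (hxy : x ≠ y) : ∃ T, c = x :: (T ++ [y]) := by
  obtain ⟨l, rfl⟩ := h.exists_eq_cons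
  rcases l.eq_nil_or_concat' with rfl | ⟨T, w, rfl⟩
  · exact absurd (isCovChain_singleton_iff.1 h).2 hxy
  · have hw := h.getLast?_eq
    rw [← List.cons_append, List.getLast?_concat, Option.some_inj] at hw
    exact ⟨T, by rw [hw]⟩

theorem pairwise_lt (h : IsCovChain x y c) : c.Pairwise (· < ·) :=
  List.isChain_iff_pairwise.1 (h.isChain.imp fun _ _ => CovBy.lt)

theorem le (h : IsCovChain x y c) : x ≤ y := by
  obtain ⟨l, rfl⟩ := h.exists_eq_cons
  induction l generalizing x with
  | nil => exact ((isCovChain_singleton_iff.1 h).2).le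
  | cons z l ih =>
    obtain ⟨-, hxz, hz⟩ := isCovChain_cons_cons_iff.1 h
    exact hxz.le.trans (ih hz)

theorem le_of_mem (h : IsCovChain x y c) (hz : z ∈ c) : x ≤ z ∧ z ≤ y := by
  obtain ⟨A, B, rfl⟩ := List.append_of_mem hz
  obtain ⟨hA, hB⟩ := isCovChain_append_cons_iff.1 h
  exact ⟨hA.le, hB.le⟩

theorem eq_singleton (h : IsCovChain x x c) : c = [x] := by
  obtain ⟨_ | ⟨z, l⟩, rfl⟩ := h.exists_eq_cons
  · rfl
  · obtain ⟨-, hxz, hz⟩ := isCovChain_cons_cons_iff.1 h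
    exact absurd hz.le hxz.lt.not_ge

theorem mem_of_forall_le_or_le (h : IsCovChain x y c) (hxz : x ≤ z) (hzy : z ≤ y)
    (hcomp : ∀ w ∈ c, w ≤ z ∨ z ≤ w) : z ∈ c := by
  obtain ⟨l, rfl⟩ := h.exists_eq_cons
  induction l generalizing x with
  | nil =>
    obtain rfl := (isCovChain_singleton_iff.1 h).2
    simp [le_antisymm hzy hxz]
  | cons w l ih =>
    obtain ⟨-, hxw, hw⟩ := isCovChain_cons_cons_iff.1 h
    rcases eq_or_ne x z with rfl | hne
    · exact List.mem_cons_self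
    rcases hcomp w (by simp) with hwz | hzw
    · exact List.mem_cons_of_mem _ (ih hwz hw fun a ha => hcomp a (List.mem_cons_of_mem _ ha))
    · obtain rfl : z = w := hzw.eq_of_not_lt fun hzw => hxw.2 (hxz.lt_of_ne hne) hzw
      simp

end IsCovChain

theorem isSatChain_univ_iff : IsSatChain (· ≤ ·) Set.univ x y c ↔ IsCovChain x y c := by
  have hcov : ∀ {a b}, CoversIn (· ≤ ·) (intervalSet (· ≤ ·) Set.univ x y) a b ↔
      (x ≤ a ∧ a ≤ y) ∧ (x ≤ b ∧ b ≤ y) ∧ a ⋖ b := by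
    intro a b
    simp only [CoversIn, intervalSet, Set.mem_univ, true_and]
    refine and_congr_right fun ha => and_congr_right fun hb => ⟨?_, ?_⟩
    · rintro ⟨hab, hne, hmin⟩
      refine ⟨hab.lt_of_ne hne, fun z haz hzb => ?_⟩
      rcases hmin z ⟨ha.1.trans haz.le, hzb.le.trans hb.2⟩ haz.le hzb.le with rfl | rfl
      exacts [haz.ne rfl, hzb.ne rfl]
    · rintro hab
      exact ⟨hab.le, hab.ne, fun z _ haz hzb => hab.eq_or_eq haz hzb⟩
  constructor
  · rintro ⟨-, h1, h2, h3⟩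
    exact ⟨h1, h2, h3.imp fun _ _ h => (hcov.1 h).2.2⟩
  · intro h
    refine ⟨fun h0 => by simpa [h0] using h.head?_eq, h.head?_eq, h.getLast?_eq, ?_⟩
    exact (List.IsChain.iff_mem.1 h.isChain).imp fun a b ⟨ha, hb, hab⟩ =>
      hcov.2 ⟨h.le_of_mem ha, h.le_of_mem hb, hab⟩

end CovChain

section ELLabeling

variable {β : Type*} [PartialOrder β] {lab : β → β → ℤ}

theorem IsCovChain.lt_of_hasDescentAt {u v x : β} {c : List β} (hc : IsCovChain u v c)
    (hx : HasDescentAt lab c x) :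
    u < x ∧ x < v := by
  obtain ⟨A, a, b, B, rfl, -⟩ := hx
  obtain ⟨hA, hB⟩ := isCovChain_append_cons_iff.1 hc
  obtain ⟨-, hax, hxb⟩ := isCovChain_cons_cons_iff.1 hB
  obtain ⟨-, hxb, hb⟩ := isCovChain_cons_cons_iff.1 hxb
  exact ⟨hA.le.trans_lt hax.lt, hxb.lt.trans_le hb.le⟩

-- The uniqueness of the rising chain is not included: it follows from strict minimality
-- (`IsELLabeling.eq_of_isRising`).
variable (lab) in
structure IsELLabeling : Prop where
  exists_rising : ∀ ⦃x y : β⦄, x ≤ y → ∃ r, IsCovChain x y r ∧ IsRising lab r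
  lt_of_isRising : ∀ ⦃x y : β⦄ ⦃r c : List β⦄, IsCovChain x y r → IsRising lab r →
    IsCovChain x y c → c ≠ r → labelWord lab r < labelWord lab c

theorem ELShellable.exists_isELLabeling (h : ELShellable (· ≤ ·) (Set.univ : Set β)) :
    ∃ lab : β → β → ℤ, IsELLabeling lab := by
  obtain ⟨lab, hlab⟩ := h
  refine ⟨lab, fun x y hxy => ?_, fun x y r c hr hrise hc hne => ?_⟩
  · obtain ⟨r, hr, hrise, -⟩ := hlab x trivial y trivial hxy
    exact ⟨r, isSatChain_univ_iff.1 hr, List.isChain_iff_pairwise.2 hrise⟩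
  · obtain ⟨r₀, -, -, huniq, hlt⟩ := hlab x trivial y trivial hr.le
    obtain rfl := huniq r (isSatChain_univ_iff.2 hr) (List.isChain_iff_pairwise.1 hrise)
    exact hlt c (isSatChain_univ_iff.2 hc) hne

namespace IsELLabeling

variable {u v : β}

theorem eq_of_isRising (hel : IsELLabeling lab) {r c : List β} (hr : IsCovChain u v r)
    (hrise : IsRising lab r) (hc : IsCovChain u v c) (hcrise : IsRising lab c) : c = r := by
  by_contra hne
  exact lt_asymm (hel.lt_of_isRising hr hrise hc hne)
    (hel.lt_of_isRising hc hcrise hr (Ne.symm hne))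

/- Maximal chains of an interval may have different lengths, so comparing two segments
lexicographically tells nothing about longer chains through them unless the smaller word is not a
prefix of the larger one. -/
theorem not_isPrefix (hel : IsELLabeling lab) {r c : List β} (hr : IsCovChain u v r)
    (hrise : IsRising lab r) (hc : IsCovChain u v c) (hne : c ≠ r) :
    ¬ labelWord lab r <+: labelWord lab c := by
  induction r generalizing u c with
  | nil => exact absurd hr.head?_eq (by simp)
  | cons a r ih =>
    obtain rfl : u = a := by simpa using hr.head?_eq.symm
    obtain ⟨_ | ⟨y, C⟩, rfl⟩ := hc.exists_eq_cons
    · obtain rfl := (isCovChain_singleton_iff.1 hc).2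
      exact fun _ => hne hr.eq_singleton.symm
    rcases r with _ | ⟨z, R⟩
    · obtain rfl := (isCovChain_singleton_iff.1 hr).2
      exact fun _ => hne hc.eq_singleton
    obtain ⟨-, huz, hz⟩ := isCovChain_cons_cons_iff.1 hr
    obtain ⟨-, huy, hy⟩ := isCovChain_cons_cons_iff.1 hc
    have hzrise : IsRising lab (z :: R) := (List.isChain_cons.1 hrise).2
    simp only [labelWord_cons_cons, List.cons_prefix_cons]
    rintro ⟨hlab, t, ht⟩
    by_cases hyz : y = z
    · subst hyz
      exact ih hz hzrise hy (fun h => hne (by rw [h])) ⟨t, ht⟩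
    -- Compare `r` with the chain through `y` that continues by the rising chain of `[y, v]`.
    obtain ⟨ρ, hρ, hρrise⟩ := hel.exists_rising hy.le
    obtain ⟨ρ, rfl⟩ := hρ.exists_eq_cons
    have hC : IsCovChain u v (u :: y :: ρ) := isCovChain_cons_cons_iff.2 ⟨rfl, huy, hρ⟩
    have hlt : labelWord lab (z :: R) < labelWord lab (y :: ρ) := by
      have h := hel.lt_of_isRising hr hrise hC (by simp [hyz])
      rwa [labelWord_cons_cons, labelWord_cons_cons, hlab, List.cons_lt_cons_self] at h
    have hle : labelWord lab (y :: ρ) ≤ labelWord lab (z :: R) ++ t := by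
      rw [ht]
      rcases eq_or_ne (y :: C) (y :: ρ) with h | h
      · rw [h]
      · exact (hel.lt_of_isRising hρ hρrise hy h).le
    obtain ⟨s, hs⟩ := isPrefix_of_lt_of_le_append hlt hle
    rcases R with _ | ⟨w, R⟩
    · obtain rfl := (isCovChain_singleton_iff.1 hz).2
      exact huz.2 huy.lt (hy.le.lt_of_ne hyz)
    have hCrise : IsRising lab (u :: y :: ρ) := by
      rw [IsRising, labelWord_cons_cons, ← hs, labelWord_cons_cons, List.cons_append, ← hlab]
      refine List.isChain_cons_cons.2 ⟨(List.isChain_cons_cons.1 hrise).1, ?_⟩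
      rw [← List.cons_append, ← labelWord_cons_cons, hs]
      exact hρrise
    have h := hel.eq_of_isRising hr hrise hC hCrise
    exact hyz (List.cons.inj (List.cons.inj h).2).1

theorem append_lt_append (hel : IsELLabeling lab) {r c : List β} (hr : IsCovChain u v r)
    (hrise : IsRising lab r) (hc : IsCovChain u v c) (hne : c ≠ r) (s t : List ℤ) :
    labelWord lab r ++ s < labelWord lab c ++ t :=
  append_lt_append_of_lt_of_not_isPrefix (hel.lt_of_isRising hr hrise hc hne)
    (hel.not_isPrefix hr hrise hc hne) s t

theorem append_lt_append_of_forall_not_hasDescentAt (hel : IsELLabeling lab) {c c' : List β}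
    (hc : IsCovChain u v c) (hc' : IsCovChain u v c') (hne : c ≠ c')
    (hdesc : ∀ x ∉ c', ¬ HasDescentAt lab c x) (s t : List ℤ) :
    labelWord lab c ++ s < labelWord lab c' ++ t := by
  classical
  induction hlen : c.length using Nat.strong_induction_on generalizing u c c' s t with
  | _ n ih =>
  obtain ⟨l, rfl⟩ := hc.exists_eq_cons
  have hv : v ∈ l := by
    rcases l with _ | ⟨w, l⟩
    · obtain rfl := (isCovChain_singleton_iff.1 hc).2
      exact absurd hc'.eq_singleton.symm hne
    · exact List.mem_of_getLast? (by simpa using hc.getLast?_eq)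
  -- Split `c` at the first element `z` after `u` that lies on `c'`. Either `c` and `c'` agree up
  -- to `z`, or the segment of `c` from `u` to `z`, whose interior avoids `c'`, is rising.
  obtain ⟨z, hz⟩ := Option.isSome_iff_exists.1 <|
    List.find?_isSome (p := fun x => decide (x ∈ c')).2
      ⟨v, hv, by simpa using List.mem_of_getLast? hc'.getLast?_eq⟩
  obtain ⟨hzc', X, B, rfl, hX⟩ := List.find?_eq_some_iff_append.1 hz
  simp only [decide_eq_true_eq, Bool.not_eq_true', decide_eq_false_iff_not] at hzc' hX
  obtain ⟨A', B', rfl⟩ := List.append_of_mem hzc'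
  rw [← List.cons_append] at hc hdesc hne ⊢
  obtain ⟨hL, hR⟩ := isCovChain_append_cons_iff.1 hc
  obtain ⟨hL', hR'⟩ := isCovChain_append_cons_iff.1 hc'
  rw [labelWord_append_cons lab (u :: X), labelWord_append_cons lab A', List.append_assoc,
    List.append_assoc]
  by_cases hA' : u :: X = A'
  · subst hA'
    refine List.append_left_lt (ih _ ?_ hR hR' (fun h => hne (by rw [h])) ?_ _ _ rfl)
    · simp [← hlen]
    · intro x hx hdx
      have hzx := (hR.lt_of_hasDescentAt hdx).1
      refine hdesc x ?_ (hdx.append_left _)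
      simp only [List.mem_append, not_or]
      exact ⟨fun hxL => hzx.not_ge (hL.le_of_mem (List.mem_append_left _ hxL)).2, hx⟩
  · refine hel.append_lt_append hL (isRising_of_forall_not_hasDescentAt fun x hdx => ?_) hL'
      (fun h => hA' (List.append_cancel_right h).symm) _ _
    have hx := hL.lt_of_hasDescentAt hdx
    have hxX : x ∈ X := by
      simpa [hx.1.ne', hx.2.ne] using hdx.mem
    exact hdesc x (hX x hxX) (by simpa using hdx.append_right B)

theorem exists_hasDescentAt_not_mem (hel : IsELLabeling lab) {c c' : List β}
    (hc : IsCovChain u v c) (hc' : IsCovChain u v c') (hne : c ≠ c')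
    (hle : labelWord lab c' ≤ labelWord lab c) : ∃ x ∉ c', HasDescentAt lab c x := by
  by_contra! h
  exact (hel.append_lt_append_of_forall_not_hasDescentAt hc hc' hne h [] []).not_ge
    (by simpa using hle)

theorem exists_lt_of_hasDescentAt (hel : IsELLabeling lab) {c : List β} {x : β}
    (hc : IsCovChain u v c) (hx : HasDescentAt lab c x) :
    ∃ c', IsCovChain u v c' ∧ labelWord lab c' < labelWord lab c ∧ ∀ z ∈ c, z ≠ x → z ∈ c' := by
  obtain ⟨A, a, b, B, rfl, hlt⟩ := hx
  obtain ⟨hA, hB⟩ := isCovChain_append_cons_iff.1 hc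
  have hB : IsCovChain a v ([a, x] ++ b :: B) := hB
  obtain ⟨haxb, hb⟩ := isCovChain_append_cons_iff.1 hB
  obtain ⟨ρ, hρ, hρrise⟩ := hel.exists_rising haxb.le
  obtain ⟨-, hax, hxb⟩ := isCovChain_cons_cons_iff.1 haxb
  obtain ⟨T, rfl⟩ := hρ.exists_eq_cons_append (hax.lt.trans_le hxb.le).ne
  have hne : [a, x, b] ≠ a :: (T ++ [b]) := by
    intro h
    have hrise : IsRising lab [a, x, b] := h ▸ hρrise
    exact hlt.not_ge (List.isChain_cons_cons.1 hrise).1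
  refine ⟨A ++ a :: (T ++ b :: B), ?_, ?_, ?_⟩
  · exact isCovChain_append_cons_iff.2 ⟨hA, (isCovChain_append_cons_iff (A := a :: T)).2 ⟨hρ, hb⟩⟩
  · rw [labelWord_append_cons lab A a (T ++ b :: B), labelWord_append_cons lab A a (x :: b :: B),
      ← List.cons_append, labelWord_append_cons lab (a :: T) b B,
      show a :: x :: b :: B = [a, x] ++ b :: B from rfl, labelWord_append_cons lab [a, x] b B]
    exact List.append_left_lt (hel.append_lt_append hρ hρrise haxb hne _ _)
  · intro z hz hzx
    simp only [List.mem_append, List.mem_cons] at hz ⊢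
    tauto

end IsELLabeling

end ELLabeling

section Facets

variable {β : Type*} [PartialOrder β]

theorem le_or_le_of_pairwise_lt {A B : List β} {a b w : β}
    (hl : (A ++ a :: b :: B).Pairwise (· < ·)) (hw : w ∈ A ++ a :: b :: B) : w ≤ a ∨ b ≤ w := by
  rw [List.pairwise_append] at hl
  simp only [List.mem_append, List.mem_cons] at hw
  rcases hw with hw | rfl | rfl | hw
  · exact Or.inl (hl.2.2 w hw a (by simp)).le
  · exact Or.inl le_rfl
  · exact Or.inr le_rfl
  · exact Or.inr (List.rel_of_pairwise_cons (List.pairwise_cons.1 hl.2.1).2 hw).le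

theorem IsFacet.mem_of_forall_le_or_le {s : Finset β} {z : β} (hs : IsFacet (· ≤ ·) Set.univ s)
    (hz : ∀ w ∈ s, w ≤ z ∨ z ≤ w) : z ∈ s := by
  classical
  have hchain : IsPChain (· ≤ ·) Set.univ (insert z s) := by
    refine ⟨Set.subset_univ _, fun x hx y hy => ?_⟩
    rcases Finset.mem_insert.1 hx with rfl | hxs <;> rcases Finset.mem_insert.1 hy with rfl | hys
    · exact Or.inl le_rfl
    · exact (hz y hys).symm
    · exact hz x hxs
    · exact hs.1.2 x hxs y hys
  rw [hs.2 _ hchain (Finset.subset_insert _ _)]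
  exact Finset.mem_insert_self _ _

-- Sorting a chain along a linear extension of `≤` lists it in increasing order.
def LinExtLE (x y : β) : Prop := toLinearExtension x ≤ toLinearExtension y

noncomputable instance : DecidableRel (LinExtLE (β := β)) := fun _ _ => Classical.dec _

instance : IsTrans β LinExtLE := ⟨fun _ _ _ => le_trans (α := LinearExtension β)⟩

instance : Std.Antisymm (LinExtLE (β := β)) := ⟨fun _ _ => le_antisymm (α := LinearExtension β)⟩

instance : Std.Total (LinExtLE (β := β)) := ⟨fun _ _ => le_total (α := LinearExtension β) _ _⟩

theorem linExtLE_of_le {x y : β} (h : x ≤ y) : LinExtLE x y := toLinearExtension.monotone h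

theorem IsCovChain.sort_toFinset [DecidableEq β] {x y : β} {c : List β} (hc : IsCovChain x y c) :
    c.toFinset.sort LinExtLE = c :=
  List.Perm.eq_of_pairwise' (Finset.pairwise_sort _ _)
    (hc.pairwise_lt.imp fun h => linExtLE_of_le h.le)
    (List.perm_of_nodup_nodup_toFinset_eq (Finset.sort_nodup _ _) hc.pairwise_lt.nodup
      (Finset.sort_toFinset _ _))

variable [BoundedOrder β]

theorem IsCovChain.isFacet_toFinset [DecidableEq β] {c : List β} (hc : IsCovChain ⊥ ⊤ c) :
    IsFacet (· ≤ ·) Set.univ c.toFinset := by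
  have hcomp : ∀ x ∈ c, ∀ y ∈ c, x ≤ y ∨ y ≤ x :=
    List.Pairwise.forall_of_forall_of_flip (fun _ _ => Or.inl le_rfl)
      (hc.pairwise_lt.imp fun h => Or.inl h.le) (hc.pairwise_lt.imp fun h => Or.inr h.le)
  refine ⟨⟨Set.subset_univ _, by simpa using hcomp⟩, fun t ht hct => ?_⟩
  refine hct.antisymm fun z hz => List.mem_toFinset.2 ?_
  exact hc.mem_of_forall_le_or_le bot_le le_top fun w hw =>
    ht.2 w (hct (List.mem_toFinset.2 hw)) z hz

theorem IsFacet.isCovChain_sort {s : Finset β} (hs : IsFacet (· ≤ ·) Set.univ s) :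
    IsCovChain ⊥ ⊤ (s.sort LinExtLE) := by
  have hmem : ∀ {x}, x ∈ s.sort LinExtLE ↔ x ∈ s := Finset.mem_sort _
  have hlt : (s.sort LinExtLE).Pairwise (· < ·) := by
    refine ((Finset.pairwise_sort s _).and (Finset.sort_nodup s _)).imp_of_mem
      fun ha hb ⟨hab, hne⟩ => ?_
    rcases hs.1.2 _ (hmem.1 ha) _ (hmem.1 hb) with h | h
    · exact h.lt_of_ne hne
    · exact absurd (antisymm hab (linExtLE_of_le h)) hne
  have hbot : ⊥ ∈ s.sort LinExtLE := hmem.2 (hs.mem_of_forall_le_or_le fun _ _ => Or.inr bot_le)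
  have htop : ⊤ ∈ s.sort LinExtLE := hmem.2 (hs.mem_of_forall_le_or_le fun _ _ => Or.inl le_top)
  refine ⟨?_, ?_, List.isChain_iff_forall_rel_of_append_cons_cons.2 fun a b l₁ l₂ hl => ?_⟩
  · obtain ⟨A, B, hAB⟩ := List.append_of_mem hbot
    rw [hAB] at hlt ⊢
    rcases A with _ | ⟨a, A⟩
    · rfl
    · exact absurd (List.rel_of_pairwise_cons hlt (by simp)) not_lt_bot
  · obtain ⟨A, B, hAB⟩ := List.append_of_mem htop
    rw [hAB] at hlt ⊢
    rcases B with _ | ⟨b, B⟩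
    · exact List.getLast?_concat
    · exact absurd (List.rel_of_pairwise_cons (List.pairwise_append.1 hlt).2.1 List.mem_cons_self)
        not_top_lt
  · rw [hl] at hlt hmem
    refine ⟨List.rel_of_pairwise_cons (List.pairwise_append.1 hlt).2.1 List.mem_cons_self,
      fun z haz hzb => ?_⟩
    have hzs : z ∈ s := hs.mem_of_forall_le_or_le fun w hw =>
      (le_or_le_of_pairwise_lt hlt (hmem.2 hw)).imp (·.trans haz.le) (hzb.le.trans ·)
    rcases le_or_le_of_pairwise_lt hlt (hmem.2 hzs) with h | h
    exacts [haz.not_ge h, hzb.not_ge h]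

end Facets

theorem shellable_of_exists_erase_subset [Finite α] [DecidableEq α] {κ : Type*} [LinearOrder κ]
    {le : α → α → Prop} {P : Set α} (w : Finset α → κ)
    (h : ∀ F G, IsFacet le P F → IsFacet le P G → G ≠ F → w G ≤ w F →
      ∃ x ∈ F, x ∉ G ∧ ∃ F', IsFacet le P F' ∧ w F' < w F ∧ F.erase x ⊆ F') :
    Shellable le P := by
  have hfin : {F : Finset α | IsFacet le P F}.Finite := Set.toFinite _
  set L := hfin.toFinset.toList.mergeSort (fun F G => decide (w F ≤ w G))
  have hmem : ∀ F, IsFacet le P F ↔ F ∈ L := by simp [L]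
  have hsorted : ∀ i j : Fin L.length, i < j → w (L.get i) ≤ w (L.get j) := by
    refine (List.pairwise_iff_get (R := fun F G => w F ≤ w G)).1 ?_
    simpa using List.pairwise_mergeSort (le := fun F G => decide (w F ≤ w G))
      (by simpa using fun _ _ _ => le_trans) (by simpa using fun F G => le_total (w F) (w G)) _
  have hnodup : L.Nodup := (List.mergeSort_perm _ _).nodup_iff.2 (Finset.nodup_toList _)
  refine ⟨L, hnodup, hmem, ?_⟩
  rintro k - σ hσk ⟨i, hik, hσi⟩
  obtain ⟨x, hxk, hxi, F', hF', hlt, hsub⟩ := h _ _ ((hmem _).2 (List.get_mem L k))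
    ((hmem _).2 (List.get_mem L i)) (fun h => hik.ne (congrArg Fin.val (hnodup.get_inj_iff.1 h)))
    (hsorted i k hik)
  obtain ⟨j, rfl⟩ := List.mem_iff_get.1 ((hmem _).1 hF')
  refine ⟨(L.get k).erase x, Finset.subset_erase.2 ⟨hσk, fun hxσ => hxi (hσi hxσ)⟩, Finset.erase_subset _ _,
    ⟨j, ?_, hsub⟩, Finset.card_erase_add_one hxk⟩
  by_contra! hkj
  rcases (Fin.le_iff_val_le_val.2 hkj).eq_or_lt with rfl | hkj
  exacts [hlt.false, hlt.not_ge (hsorted k j hkj)]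

/-- Every bounded EL-shellable finite poset is shellable. -/
theorem stmt_3 {β : Type*} [PartialOrder β] [Finite β]
    (hb : Bounded (· ≤ ·) (Set.univ : Set β))
    (hel : ELShellable (· ≤ ·) (Set.univ : Set β)) :
    Shellable (· ≤ ·) (Set.univ : Set β) := by
  classical
  obtain ⟨⟨m, -, hm⟩, M, -, hM⟩ := hb
  let _ : BoundedOrder β :=
    { bot := m, bot_le := fun x => hm x trivial, top := M, le_top := fun x => hM x trivial }
  obtain ⟨lab, hlab⟩ := hel.exists_isELLabeling
  refine shellable_of_exists_erase_subset (fun F => labelWord lab (F.sort LinExtLE)) ?_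
  intro F G hF hG hne hle
  have hsort_ne : F.sort LinExtLE ≠ G.sort LinExtLE := fun h =>
    hne (by rw [← Finset.sort_toFinset G LinExtLE, ← h, Finset.sort_toFinset])
  obtain ⟨x, hxG, hx⟩ :=
    hlab.exists_hasDescentAt_not_mem hF.isCovChain_sort hG.isCovChain_sort hsort_ne hle
  obtain ⟨c, hc, hlt, hsub⟩ := hlab.exists_lt_of_hasDescentAt hF.isCovChain_sort hx
  refine ⟨x, (Finset.mem_sort _).1 hx.mem, fun hxG' => hxG ((Finset.mem_sort _).2 hxG'),
    c.toFinset, hc.isFacet_toFinset, by rwa [hc.sort_toFinset], fun z hz => ?_⟩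
  obtain ⟨hzx, hzF⟩ := Finset.mem_erase.1 hz
  exact List.mem_toFinset.2 (hsub z ((Finset.mem_sort _).2 hzF) hzx)

end KohnertPaper
end

section
/- Let D be a diagram, and let D_1, D_2 be diagrams in the Kohnert poset P(D) with D_2 ≺ D_1. Suppose there are columns 0 < c_1 < ⋯ < c_n and rows 0 < r^i_1 < r^i_2 for each i such that, letting R = ⋃_{i=1}^n {(r̃, c_i) : r^i_1 ≤ r̃ ≤ r^i_2}, one has D_1 \ R = D_2 \ R = S. Then every diagram D̃ in the interval [D_2, D_1] of P(D) satisfies D̃ \ R = S. -/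
namespace KohnertPaper

variable {α : Type*}

/-!
A Kohnert move takes one cell of a column to a lower row of the same column. Hence the number
`colCountFrom X γ t` of cells of `X` in column `γ` at rows `≥ t` can only decrease along Kohnert
moves, while the number of cells of column `γ` never changes. Let `(ρ, γ) ∉ R`. Each column of `R`
is an interval of rows, so all of the `R`-part of column `γ` lies above `ρ` or all of it lies
below. In the first case `D1` and `D2` agree on column `γ` below row `ρ + 1` and, having equal
column totals, they have the same counts from rows `ρ` and `ρ + 1` on; in the second case they
agree on column `γ` from row `ρ` on. Any `T` between them has these same two counts, and their
difference tells whether `(ρ, γ) ∈ T`.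
-/

open Finset

def colCountFrom (X : Diagram) (γ t : ℕ) : ℕ :=
  #(X.filter fun p => p.2 = γ ∧ t ≤ p.1)

/-- Each column of `R` is an interval of rows. -/
def ColumnConvex (R : Diagram) : Prop :=
  ∀ p ∉ R, (∀ q ∈ R, q.2 = p.2 → p.1 < q.1) ∨ (∀ q ∈ R, q.2 = p.2 → q.1 < p.1)

lemma card_filter_insert_erase_add {β : Type*} [DecidableEq β] {s : Finset β} {a b : β}
    (ha : a ∈ s) (hb : b ∉ s) (P : β → Prop) [DecidablePred P] :
    #((insert b (s.erase a)).filter P) + (if P a then 1 else 0)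
      = #(s.filter P) + (if P b then 1 else 0) := by
  have hb' : b ∉ (s.filter P).erase a := fun h => hb (mem_filter.1 (mem_of_mem_erase h)).1
  have herase : #((s.filter P).erase a) + (if P a then 1 else 0) = #(s.filter P) := by
    split_ifs with hPa
    · exact card_erase_add_one (mem_filter.2 ⟨ha, hPa⟩)
    · rw [erase_eq_of_notMem fun h => hPa (mem_filter.1 h).2, add_zero]
  rw [filter_insert, filter_erase]
  by_cases hPb : P b
  · rw [if_pos hPb, if_pos hPb, card_insert_of_notMem hb']
    omega
  · rw [if_neg hPb, if_neg hPb]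
    omega

lemma KMove.exists_eq_insert_erase {D D' : Diagram} (h : KMove D D') :
    ∃ r γ r', r' < r ∧ (r, γ) ∈ D ∧ (r', γ) ∉ D ∧ D' = insert (r', γ) (D.erase (r, γ)) := by
  obtain ⟨r, γ, r', -, hlt, hmem, -, hnot, -, rfl⟩ := h
  exact ⟨r, γ, r', hlt, hmem, hnot, rfl⟩

lemma KMove.colCountFrom_le {D D' : Diagram} (h : KMove D D') (γ t : ℕ) :
    colCountFrom D' γ t ≤ colCountFrom D γ t := by
  obtain ⟨r, γ₀, r', hlt, hmem, hnot, rfl⟩ := h.exists_eq_insert_erase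
  have := card_filter_insert_erase_add hmem hnot fun p => p.2 = γ ∧ t ≤ p.1
  unfold colCountFrom
  split_ifs at this with h₁ h₂ h₂ <;> simp only at h₁ h₂ <;> omega

lemma KMove.colCountFrom_zero {D D' : Diagram} (h : KMove D D') (γ : ℕ) :
    colCountFrom D' γ 0 = colCountFrom D γ 0 := by
  obtain ⟨r, γ₀, r', -, hmem, hnot, rfl⟩ := h.exists_eq_insert_erase
  have := card_filter_insert_erase_add hmem hnot fun p => p.2 = γ ∧ 0 ≤ p.1
  unfold colCountFrom
  split_ifs at this with h₁ h₂ h₂ <;> simp only at h₁ h₂ <;> omega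

lemma KReach.colCountFrom_le {D D' : Diagram} (h : KReach D D') (γ t : ℕ) :
    colCountFrom D' γ t ≤ colCountFrom D γ t := by
  induction h with
  | refl => exact le_rfl
  | tail _ hm ih => exact (hm.colCountFrom_le γ t).trans ih

lemma KReach.colCountFrom_zero {D D' : Diagram} (h : KReach D D') (γ : ℕ) :
    colCountFrom D' γ 0 = colCountFrom D γ 0 := by
  induction h with
  | refl => rfl
  | tail _ hm ih => rw [hm.colCountFrom_zero, ih]

lemma colCountFrom_eq_add_ite (X : Diagram) (γ r : ℕ) :
    colCountFrom X γ r = colCountFrom X γ (r + 1) + if (r, γ) ∈ X then 1 else 0 := by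
  have hsplit : (X.filter fun p => p.2 = γ ∧ r ≤ p.1)
      = (X.filter fun p => p.2 = γ ∧ r + 1 ≤ p.1) ∪ X.filter fun p => p = (r, γ) := by
    ext ⟨a, b⟩
    simp only [mem_filter, mem_union, Prod.mk.injEq]
    constructor
    · rintro ⟨hp, rfl, hr⟩
      rcases hr.eq_or_lt with rfl | hr
      · exact Or.inr ⟨hp, rfl, rfl⟩
      · exact Or.inl ⟨hp, rfl, hr⟩
    · rintro (⟨hp, rfl, hr⟩ | ⟨hp, rfl, rfl⟩) <;> exact ⟨hp, rfl, by omega⟩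
  have hdisj : Disjoint (X.filter fun p => p.2 = γ ∧ r + 1 ≤ p.1) (X.filter fun p => p = (r, γ)) :=
    disjoint_filter.2 fun p _ h₁ h₂ => by rw [h₂] at h₁; omega
  unfold colCountFrom
  rw [hsplit, card_union_of_disjoint hdisj, filter_eq']
  split_ifs <;> rfl

lemma mem_iff_of_colCountFrom_eq {X Y : Diagram} {ρ γ : ℕ}
    (h₀ : colCountFrom X γ ρ = colCountFrom Y γ ρ)
    (h₁ : colCountFrom X γ (ρ + 1) = colCountFrom Y γ (ρ + 1)) :
    (ρ, γ) ∈ X ↔ (ρ, γ) ∈ Y := by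
  rw [colCountFrom_eq_add_ite X, colCountFrom_eq_add_ite Y, h₁] at h₀
  split_ifs at h₀ <;> simp_all

lemma colCountFrom_eq_of_forall_le_mem_iff {X Y : Diagram} {γ t : ℕ}
    (h : ∀ s, t ≤ s → ((s, γ) ∈ X ↔ (s, γ) ∈ Y)) :
    colCountFrom X γ t = colCountFrom Y γ t := by
  unfold colCountFrom
  congr 1
  ext ⟨s, b⟩
  simp only [mem_filter]
  constructor <;> rintro ⟨hp, rfl, hs⟩ <;> simp_all

lemma colCountFrom_add_card_filter_lt (X : Diagram) (γ t : ℕ) :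
    colCountFrom X γ t + #(X.filter fun p => p.2 = γ ∧ p.1 < t) = colCountFrom X γ 0 := by
  unfold colCountFrom
  rw [← card_union_of_disjoint (disjoint_filter.2 fun p _ h₁ h₂ => by omega), ← filter_or]
  exact congrArg card (filter_congr fun p _ => by omega)

lemma colCountFrom_eq_of_forall_lt_mem_iff {X Y : Diagram} {γ t : ℕ}
    (htot : colCountFrom X γ 0 = colCountFrom Y γ 0)
    (h : ∀ s, s < t → ((s, γ) ∈ X ↔ (s, γ) ∈ Y)) :
    colCountFrom X γ t = colCountFrom Y γ t := by
  have hlow : (X.filter fun p => p.2 = γ ∧ p.1 < t) = Y.filter fun p => p.2 = γ ∧ p.1 < t := by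
    ext ⟨s, b⟩
    simp only [mem_filter]
    constructor <;> rintro ⟨hp, rfl, hs⟩ <;> simp_all
  have hX := colCountFrom_add_card_filter_lt X γ t
  have hY := colCountFrom_add_card_filter_lt Y γ t
  rw [hlow] at hX
  omega

lemma colCountFrom_eq_of_KReach_of_KReach {D₁ D₂ T : Diagram} {γ t : ℕ}
    (h₁ : KReach D₁ T) (h₂ : KReach T D₂) (h : colCountFrom D₁ γ t = colCountFrom D₂ γ t) :
    colCountFrom T γ t = colCountFrom D₁ γ t :=
  le_antisymm (h₁.colCountFrom_le γ t) (h ▸ h₂.colCountFrom_le γ t)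

theorem ColumnConvex.sdiff_eq_of_KReach {R D₁ D₂ T : Diagram} (hR : ColumnConvex R)
    (hS : D₁ \ R = D₂ \ R) (h₁ : KReach D₁ T) (h₂ : KReach T D₂) : T \ R = D₁ \ R := by
  have hagree : ∀ q ∉ R, q ∈ D₁ ↔ q ∈ D₂ := fun q hq => by
    simpa [hq] using congrArg (q ∈ ·) hS
  ext ⟨ρ, γ⟩
  simp only [mem_sdiff, and_congr_left_iff]
  intro hp
  have hcount : ∀ t, ρ ≤ t → t ≤ ρ + 1 → colCountFrom D₁ γ t = colCountFrom D₂ γ t := by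
    intro t hρt htρ
    rcases hR _ hp with above | below
    · refine colCountFrom_eq_of_forall_lt_mem_iff ?_ fun s hs => hagree _ fun hsR => ?_
      · rw [KReach.colCountFrom_zero (h₁.trans h₂)]
      · exact absurd (above _ hsR rfl) (by simp only; omega)
    · refine colCountFrom_eq_of_forall_le_mem_iff fun s hs => hagree _ fun hsR => ?_
      exact absurd (below _ hsR rfl) (by simp only; omega)
  refine mem_iff_of_colCountFrom_eq ?_ ?_
  · exact colCountFrom_eq_of_KReach_of_KReach h₁ h₂ (hcount ρ le_rfl (by omega))
  · exact colCountFrom_eq_of_KReach_of_KReach h₁ h₂ (hcount (ρ + 1) (by omega) le_rfl)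

lemma columnConvex_of_mem_iff_exists {ι : Type*} {c r₁ r₂ : ι → ℕ} (hc : Function.Injective c)
    {R : Diagram} (hR : ∀ p : ℕ × ℕ, p ∈ R ↔ ∃ i, p.2 = c i ∧ r₁ i ≤ p.1 ∧ p.1 ≤ r₂ i) :
    ColumnConvex R := by
  intro p hp
  by_cases hcol : ∃ i, p.2 = c i
  · obtain ⟨i, hi⟩ := hcol
    have hseg : ∀ q ∈ R, q.2 = p.2 → r₁ i ≤ q.1 ∧ q.1 ≤ r₂ i := fun q hq hqp => by
      obtain ⟨j, hj, hseg⟩ := (hR q).1 hq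
      obtain rfl : j = i := hc (hj.symm.trans (hqp.trans hi))
      exact hseg
    have hout : p.1 < r₁ i ∨ r₂ i < p.1 := by
      by_contra! h
      exact hp ((hR p).2 ⟨i, hi, h⟩)
    refine hout.imp (fun h q hq hqp => ?_) fun h q hq hqp => ?_ <;>
      have := hseg q hq hqp <;> omega
  · refine Or.inl fun q hq hqp => absurd ?_ hcol
    obtain ⟨j, hj, -⟩ := (hR q).1 hq
    exact ⟨j, hqp ▸ hj⟩

theorem stmt_4_general (D1 D2 : Diagram)
    (n : ℕ) (c r1 r2 : Fin n → ℕ)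
    (hc : StrictMono c)
    (R : Finset (ℕ × ℕ))
    (hR : ∀ p : ℕ × ℕ, p ∈ R ↔ ∃ i : Fin n, p.2 = c i ∧ r1 i ≤ p.1 ∧ p.1 ≤ r2 i)
    (hS : D1 \ R = D2 \ R) :
    ∀ T : Diagram, KReach D1 T → KReach T D2 → T \ R = D1 \ R :=
  fun _ h₁ h₂ => (columnConvex_of_mem_iff_exists hc.injective hR).sdiff_eq_of_KReach hS h₁ h₂

/-- If `D₁, D₂ ∈ P(D)` with `D₂ ≺ D₁` agree outside a union `R` of column segments
`{(r̃,cᵢ) : r₁ⁱ ≤ r̃ ≤ r₂ⁱ}` (with `0 < c₁ < ⋯ < c_n` and `0 < r₁ⁱ < r₂ⁱ`), then every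
diagram of the interval `[D₂, D₁]` agrees with them outside `R`. -/
theorem stmt_4 (D D1 D2 : Diagram)
    (hD1 : KReach D D1) (hD2 : KReach D D2)
    (hlt : KReach D1 D2) (hne : D2 ≠ D1)
    (n : ℕ) (c r1 r2 : Fin n → ℕ)
    (hc : StrictMono c) (hcpos : ∀ i, 0 < c i)
    (hr : ∀ i, 0 < r1 i ∧ r1 i < r2 i)
    (R : Finset (ℕ × ℕ))
    (hR : ∀ p : ℕ × ℕ, p ∈ R ↔ ∃ i : Fin n, p.2 = c i ∧ r1 i ≤ p.1 ∧ p.1 ≤ r2 i)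
    (hS : D1 \ R = D2 \ R) :
    ∀ T : Diagram, KReach D1 T → KReach T D2 → T \ R = D1 \ R :=
  stmt_4_general D1 D2 n c r1 r2 hc R hR hS

end KohnertPaper
end

section
/- A diagram D is a hook diagram if and only if there exists a column c* > 0 such that: (i) column c* of D is nonempty and every column c̃ > c* is empty; (ii) any column of D containing more than one cell must equal c*; (iii) if r is maximal with (r,c*) ∈ D and c̃ < c*, then (r̃,c̃) ∈ D implies r̃ ≥ r; and (iv) if (r̃_1,c̃_1), (r̃_2,c̃_2) ∈ D with c̃_1 < c̃_2 < c*, then r̃_1 ≥ r̃_2. -/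
namespace KohnertPaper

variable {α : Type*}

/-! The conditions are invariant under Kohnert moves, and every seed `H(r₁,r₂;C)` satisfies them
with `c* = max C`. Conversely, a diagram satisfying them is reached from `H(r₂ + 1 - k, r₂; C)`,
where `r₂` is its highest row, `k` the number of its cells in column `c*` and `C` its set of
columns. First column `c*` is rearranged from the interval `[r₂ + 1 - k, r₂]` into its final rows:
while the top of the interval is not a final row, its top cell jumps to just below the interval;
otherwise that cell stays and the interval shrinks. Then the cells of row `r₂` left of `c*` are
lowered one row at a time, from right to left. -/

open Finset

-- Condition (iii) is stated for every cell of column `c`, not only the highest one; for a finite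
-- diagram the two forms are equivalent.
structure IsHookShape (c : ℕ) (D : Diagram) : Prop where
  exists_mem : ∃ r, (r, c) ∈ D
  not_mem_of_lt : ∀ c', c < c' → ∀ r, (r, c') ∉ D
  eq_of_mem_of_mem : ∀ c' r r', (r, c') ∈ D → (r', c') ∈ D → r ≠ r' → c' = c
  le_of_mem : ∀ r r' c', c' < c → (r, c) ∈ D → (r', c') ∈ D → r ≤ r'
  antitone : ∀ r₁ c₁ r₂ c₂, (r₁, c₁) ∈ D → (r₂, c₂) ∈ D → c₁ < c₂ → c₂ < c → r₂ ≤ r₁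

lemma mem_hookSeed {r₁ r₂ : ℕ} {C : Finset ℕ} {hC : C.Nonempty} {r c : ℕ} :
    (r, c) ∈ hookSeed r₁ r₂ C hC ↔ r = r₂ ∧ c ∈ C ∨ r₁ ≤ r ∧ r ≤ r₂ ∧ c = C.max' hC := by
  simp only [hookSeed, mem_union, mem_image, mem_Icc, Prod.mk.injEq]
  grind

lemma isHookShape_hookSeed {r₁ r₂ : ℕ} {C : Finset ℕ} (hC : C.Nonempty) :
    IsHookShape (C.max' hC) (hookSeed r₁ r₂ C hC) := by
  have hle : ∀ c ∈ C, c ≤ C.max' hC := fun c hc => C.le_max' c hc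
  refine ⟨⟨r₂, mem_hookSeed.2 (.inl ⟨rfl, C.max'_mem hC⟩)⟩, ?_, ?_, ?_, ?_⟩ <;>
    simp only [mem_hookSeed] <;> grind

lemma IsHookShape.kMove {c : ℕ} {D D' : Diagram} (hD : IsHookShape c D) (hm : KMove D D') :
    IsHookShape c D' := by
  obtain ⟨R, c₀, R', -, hR'R, hmem, hright, -, hfill, rfl⟩ := hm
  obtain ⟨⟨r₀, hr₀⟩, hlt, huniq, hle, hanti⟩ := hD
  have hc₀ : c₀ ≤ c := not_lt.1 fun h => hlt _ h R hmem
  -- Off column `c`, the moved cell is alone in its column, so it passes no cell on its way down.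
  have hbelow : c₀ ≠ c → ∀ r c', c₀ < c' → (r, c') ∈ D → r ≤ R → r ≤ R' := by
    intro hc r c' hc' hrc' hrR
    by_contra! hR'r
    rcases hrR.eq_or_lt with rfl | hrR
    · exact hright c' hc' hrc'
    · exact hc (huniq c₀ r R (hfill r hR'r hrR) hmem hrR.ne)
  refine ⟨?_, ?_, ?_, ?_, ?_⟩ <;>
    simp only [mem_insert, mem_erase, ne_eq, Prod.mk.injEq]
  · by_cases hc : c₀ = c
    · exact ⟨R', by simp [hc]⟩
    · exact ⟨r₀, by simp [hr₀, Ne.symm hc]⟩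
  · rintro c' hc' r (⟨-, rfl⟩ | ⟨-, h⟩)
    · omega
    · exact hlt c' hc' r h
  · rintro c' r r' (⟨rfl, rfl⟩ | ⟨hr, h⟩) (⟨rfl, hc⟩ | ⟨hr', h'⟩) hne
    · exact absurd rfl hne
    · exact huniq c' r' R h' hmem (by simpa using hr')
    · subst hc; exact huniq c' r R h hmem (by simpa using hr)
    · exact huniq c' r r' h h' hne
  · rintro r r' c' hc' (⟨rfl, rfl⟩ | ⟨-, h⟩) (⟨rfl, rfl⟩ | ⟨-, h'⟩)
    · omega
    · exact hR'R.le.trans (hle R r' c' hc' hmem h')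
    · exact hbelow hc'.ne r c hc' h (hle r R c' hc' h hmem)
    · exact hle r r' c' hc' h h'
  · rintro r₁ c₁ r₂ c₂ (⟨rfl, rfl⟩ | ⟨-, h₁⟩) (⟨rfl, rfl⟩ | ⟨-, h₂⟩) h₁₂ h₂c
    · omega
    · exact hbelow (by omega) r₂ c₂ h₁₂ h₂ (hanti R c₁ r₂ c₂ hmem h₂ h₁₂ h₂c)
    · exact hR'R.le.trans (hanti r₁ c₁ R c₂ h₁ hmem h₁₂ h₂c)
    · exact hanti r₁ c₁ r₂ c₂ h₁ h₂ h₁₂ h₂c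

lemma IsHookShape.kReach {c : ℕ} {D D' : Diagram} (hD : IsHookShape c D) (h : KReach D D') :
    IsHookShape c D' := by
  induction h with
  | refl => exact hD
  | tail _ hm ih => exact ih.kMove hm

lemma kReach_lower_cell (E : Diagram) {c t h : ℕ} (ht : 1 ≤ t) (hcol : ∀ q ∈ E, q.2 ≠ c)
    (hright : ∀ q ∈ E, c < q.2 → q.1 ≤ t) (hth : t ≤ h) :
    KReach (insert (h, c) E) (insert (t, c) E) := by
  induction h, hth using Nat.le_induction with
  | base => exact .refl
  | succ h hth ih =>
    have hnot : ∀ r, (r, c) ∉ E := fun r hr => hcol _ hr rfl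
    refine .head ⟨h + 1, c, h, by omega, by omega, mem_insert_self _ _, ?_, ?_,
      fun r₁ _ _ => by omega, by rw [erase_insert (hnot _)]⟩ ih
    · intro c' hc' hmem
      rcases mem_insert.1 hmem with h' | h'
      · simp only [Prod.mk.injEq] at h'; omega
      · have := hright _ h' hc'; simp only at this; omega
    · simp [hnot]

lemma kMove_shift_Icc (R : Diagram) {a b c : ℕ} (ha : 2 ≤ a) (hab : a ≤ b)
    (hR : ∀ p ∈ R, c ≤ p.2 → b < p.1) :
    KMove (R ∪ Icc a b ×ˢ {c}) (R ∪ Icc (a - 1) (b - 1) ×ˢ {c}) := by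
  have hR' : ∀ x y, (x, y) ∈ R → c ≤ y → b < x := fun x y h => hR _ h
  refine ⟨b, c, a - 1, by omega, by omega, ?_, ?_, ?_, ?_, ?_⟩
  · simp [hab]
  · intro c' hc' h
    simp only [mem_union, mem_product, mem_singleton] at h
    grind
  · intro h
    simp only [mem_union, mem_product, mem_singleton, mem_Icc] at h
    grind
  · intro r hr hrb
    exact mem_union_right _ (mem_product.2 ⟨mem_Icc.2 ⟨by omega, by omega⟩, mem_singleton_self c⟩)
  · ext ⟨x, y⟩
    simp only [mem_insert, mem_erase, mem_union, mem_product,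
      mem_Icc, mem_singleton, Prod.mk.injEq, ne_eq]
    grind

lemma kReach_shift_Icc (R : Diagram) {a b c n : ℕ} (hn : n < a) (hab : a ≤ b)
    (hR : ∀ p ∈ R, c ≤ p.2 → b < p.1) :
    KReach (R ∪ Icc a b ×ˢ {c}) (R ∪ Icc (a - n) (b - n) ×ˢ {c}) := by
  induction n with
  | zero => exact .refl
  | succ n ih =>
    have hmove := kMove_shift_Icc R (a := a - n) (b := b - n) (c := c) (by omega) (by omega)
      fun p hp hcp => (Nat.sub_le b n).trans_lt (hR p hp hcp)
    rw [Nat.sub_sub, Nat.sub_sub] at hmove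
    exact .tail (ih (by omega)) hmove

lemma kReach_Icc_product_singleton (R : Diagram) (c : ℕ) {S : Finset ℕ} {a b : ℕ} (hS : S ⊆ Icc 1 b)
    (hcard : #S = b + 1 - a) (hR : ∀ p ∈ R, c ≤ p.2 → b < p.1) :
    KReach (R ∪ Icc a b ×ˢ {c}) (R ∪ S ×ˢ {c}) := by
  induction S using Finset.induction_on_max generalizing R a b with
  | empty =>
    rw [Icc_eq_empty (by rw [card_empty] at hcard; omega)]
    exact .refl
  | insert M S hlt ih =>
    have hMS : M ∉ S := fun h => (hlt M h).false
    have hM := mem_Icc.1 (hS (mem_insert_self M S))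
    have hSM : insert M S ⊆ Icc 1 M := fun x hx => mem_Icc.2 ⟨(mem_Icc.1 (hS hx)).1,
      (mem_insert.1 hx).elim le_of_eq fun h => (hlt x h).le⟩
    have hcardM : #S + 1 ≤ M := by simpa [card_insert_of_notMem hMS] using card_le_card hSM
    rw [card_insert_of_notMem hMS] at hcard
    have hcol : ∀ T : Finset ℕ, insert (M, c) R ∪ T ×ˢ {c} = R ∪ insert M T ×ˢ {c} := by
      intro T; ext; simp
    have hshift : KReach (R ∪ Icc a b ×ˢ {c})
        (insert (M, c) R ∪ Icc (a - (b - M)) (M - 1) ×ˢ {c}) := by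
      have := kReach_shift_Icc R (n := b - M) (c := c) (show b - M < a by omega)
        (show a ≤ b by omega) hR
      rwa [Nat.sub_sub_self hM.2,
        ← insert_Icc_sub_one_right_eq_Icc (show a - (b - M) ≤ M by omega), ← hcol] at this
    refine hcol S ▸ hshift.trans (ih (insert (M, c) R) ?_ (by omega) ?_)
    · exact fun x hx => mem_Icc.2 ⟨(mem_Icc.1 (hS (mem_insert_of_mem hx))).1, by
        have := hlt x hx; omega⟩
    · intro p hp hcp
      rcases mem_insert.1 hp with rfl | hp
      · simp only; omega
      · have := hR p hp hcp; omega

lemma kReach_lower_row (r : ℕ) {L B : Diagram} (hL : ∀ p ∈ L, 1 ≤ p.1 ∧ p.1 ≤ r)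
    (hinj : Set.InjOn Prod.snd (L : Set (ℕ × ℕ)))
    (hanti : ∀ p ∈ L, ∀ q ∈ L, p.2 < q.2 → q.1 ≤ p.1)
    (hB : ∀ p ∈ L, ∀ q ∈ B, q.2 ≠ p.2 ∧ (p.2 < q.2 → q.1 ≤ p.1)) :
    KReach (B ∪ L.image fun p => (r, p.2)) (B ∪ L) := by
  induction L using Finset.induction_on_max_value (ι := ℕ × ℕ) (α := ℕ) Prod.snd
    generalizing B with
  | empty => simpa using .refl
  | insert p L hpL hmax ih =>
    obtain ⟨t, c⟩ := p
    have hlt : ∀ q ∈ L, q.2 < c := fun q hq => (hmax q hq).lt_of_ne fun h =>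
      hpL (hinj (by simp [hq]) (by simp) h ▸ hq)
    have hdrop : KReach (insert (r, c) (B ∪ L.image fun q => (r, q.2)))
        (insert (t, c) (B ∪ L.image fun q => (r, q.2))) := by
      refine kReach_lower_cell _ (hL _ (mem_insert_self _ L)).1 ?_ ?_
        (hL _ (mem_insert_self _ L)).2
      · simp only [mem_union, mem_image]
        rintro q (hq | ⟨q', hq', rfl⟩)
        · exact (hB _ (mem_insert_self _ L) q hq).1
        · exact (hlt q' hq').ne
      · simp only [mem_union, mem_image]
        rintro q (hq | ⟨q', hq', rfl⟩) hcq
        · exact (hB _ (mem_insert_self _ L) q hq).2 hcq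
        · exact absurd (hlt q' hq') hcq.not_gt
    rw [image_insert, union_insert]
    refine hdrop.trans ?_
    rw [← insert_union, union_insert, ← insert_union]
    refine ih (fun p hp => hL p (mem_insert_of_mem hp))
      (hinj.mono (coe_subset.2 (subset_insert _ L)))
      (fun p hp q hq => hanti p (mem_insert_of_mem hp) q (mem_insert_of_mem hq)) ?_
    intro p hp q hq
    rcases mem_insert.1 hq with rfl | hq
    · exact ⟨(hlt p hp).ne', hanti p (mem_insert_of_mem hp) _ (mem_insert_self _ L)⟩
    · exact hB p (mem_insert_of_mem hp) q hq

def colRows (D : Diagram) (c : ℕ) : Finset ℕ := (D.filter (·.2 = c)).image Prod.fst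

@[simp] lemma mem_colRows {D : Diagram} {c j : ℕ} : j ∈ colRows D c ↔ (j, c) ∈ D := by
  simp [colRows]

lemma exists_max_row_of_mem {D : Diagram} {r c : ℕ} (h : (r, c) ∈ D) :
    ∃ r', (r', c) ∈ D ∧ ∀ r'', (r'', c) ∈ D → r'' ≤ r' :=
  ⟨_, mem_colRows.1 (max'_mem (colRows D c) ⟨r, mem_colRows.2 h⟩),
    fun _ h' => le_max' _ _ (mem_colRows.2 h')⟩

lemma IsHookShape.eq_union {c : ℕ} {D : Diagram} (h : IsHookShape c D) :
    D = colRows D c ×ˢ {c} ∪ D.filter (·.2 < c) := by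
  ext ⟨x, y⟩
  have := h.not_mem_of_lt y
  simp only [mem_union, mem_product, mem_singleton, mem_colRows, mem_filter]
  grind

lemma hookSeed_insert_image {r₁ r₂ c : ℕ} {L : Diagram} (hr : r₁ ≤ r₂) (hL : ∀ p ∈ L, p.2 < c)
    (hC : (insert c (L.image Prod.snd)).Nonempty) :
    hookSeed r₁ r₂ (insert c (L.image Prod.snd)) hC =
      L.image (fun p => (r₂, p.2)) ∪ Icc r₁ r₂ ×ˢ {c} := by
  have hmax : (insert c (L.image Prod.snd)).max' hC = c :=
    le_antisymm (max'_le _ _ _ fun y hy => (mem_insert.1 hy).elim le_of_eq fun hy =>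
      let ⟨p, hp, hpy⟩ := mem_image.1 hy; hpy ▸ (hL p hp).le) (le_max' _ _ (mem_insert_self _ _))
  ext ⟨x, y⟩
  rw [mem_hookSeed, hmax]
  simp only [mem_insert, mem_image, mem_union, mem_product, mem_Icc, mem_singleton, Prod.mk.injEq]
  grind

lemma IsHookShape.isHookDiagram {c : ℕ} {D : Diagram} (hD : ∀ p ∈ D, 1 ≤ p.1 ∧ 1 ≤ p.2)
    (h : IsHookShape c D) : IsHookDiagram D := by
  set S := colRows D c
  set L := D.filter (·.2 < c)
  set r := D.sup Prod.fst
  have hmemL : ∀ p, p ∈ L ↔ p ∈ D ∧ p.2 < c := fun p => mem_filter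
  have hrow : ∀ p ∈ D, p.1 ≤ r := fun p hp => le_sup (f := Prod.fst) hp
  obtain ⟨r₀, hr₀⟩ := h.exists_mem
  have hSr : S ⊆ Icc 1 r := fun j hj =>
    mem_Icc.2 ⟨(hD _ (mem_colRows.1 hj)).1, hrow _ (mem_colRows.1 hj)⟩
  have hSpos : 0 < #S := card_pos.2 ⟨r₀, mem_colRows.2 hr₀⟩
  have hSr' : #S ≤ r := by simpa using card_le_card hSr
  refine ⟨r + 1 - #S, r, insert c (L.image Prod.snd), insert_nonempty _ _, by omega, by omega,
    ?_, ?_⟩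
  · simp only [mem_insert, mem_image]
    rintro _ (rfl | ⟨p, hp, rfl⟩)
    · exact (hD _ hr₀).2
    · exact (hD p ((hmemL p).1 hp).1).2
  rw [hookSeed_insert_image (by omega) fun p hp => ((hmemL p).1 hp).2, h.eq_union]
  refine (kReach_Icc_product_singleton _ c hSr (by omega) ?_).trans ?_
  · simp only [mem_image]
    rintro _ ⟨p, hp, rfl⟩ hcp
    exact absurd ((hmemL p).1 hp).2 hcp.not_gt
  rw [union_comm]
  refine kReach_lower_row r (fun p hp => ⟨(hD p ((hmemL p).1 hp).1).1, hrow p ((hmemL p).1 hp).1⟩)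
    ?_ (fun p hp q hq hpq =>
      h.antitone _ _ _ _ ((hmemL p).1 hp).1 ((hmemL q).1 hq).1 hpq ((hmemL q).1 hq).2) ?_
  · rintro ⟨x, y⟩ hp ⟨x', y'⟩ hq (rfl : y = y')
    by_contra hne
    exact ((hmemL _).1 hp).2.ne (h.eq_of_mem_of_mem y x x' ((hmemL _).1 hp).1 ((hmemL _).1 hq).1
      fun hx => hne (by rw [hx]))
  · intro p hp q hq
    rw [mem_product, mem_singleton, mem_colRows] at hq
    obtain ⟨hpD, hpc⟩ := (hmemL p).1 hp
    exact ⟨hq.2 ▸ hpc.ne', fun _ => h.le_of_mem q.1 p.1 p.2 hpc (hq.2 ▸ hq.1) hpD⟩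

/-- Characterization of hook diagrams by the distribution of their cells. -/
theorem stmt_7 (D : Diagram) (hD : ∀ p ∈ D, 1 ≤ p.1 ∧ 1 ≤ p.2) :
    IsHookDiagram D ↔
      ∃ cstar : ℕ, 0 < cstar ∧
        (∃ r, (r, cstar) ∈ D) ∧
        (∀ c', cstar < c' → ∀ r, (r, c') ∉ D) ∧
        (∀ c r r', (r, c) ∈ D → (r', c) ∈ D → r ≠ r' → c = cstar) ∧
        (∀ r, (r, cstar) ∈ D → (∀ r', (r', cstar) ∈ D → r' ≤ r) →
          ∀ r' c', c' < cstar → (r', c') ∈ D → r ≤ r') ∧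
        (∀ r1 c1 r2 c2, (r1, c1) ∈ D → (r2, c2) ∈ D →
          c1 < c2 → c2 < cstar → r2 ≤ r1) := by
  constructor
  · rintro ⟨r₁, r₂, C, hC, -, -, -, hreach⟩
    obtain ⟨⟨r, hr⟩, hlt, huniq, hle, hanti⟩ :=
      (isHookShape_hookSeed (r₁ := r₁) (r₂ := r₂) hC).kReach hreach
    exact ⟨_, (hD _ hr).2, ⟨r, hr⟩, hlt, huniq,
      fun r hr _ r' c' hc' h => hle r r' c' hc' hr h, hanti⟩
  · rintro ⟨c, -, ⟨r₀, hr₀⟩, hlt, huniq, htop, hanti⟩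
    obtain ⟨r, hr, hrmax⟩ := exists_max_row_of_mem hr₀
    exact IsHookShape.isHookDiagram hD ⟨⟨r₀, hr₀⟩, hlt, huniq,
      fun r₁ r' c' hc' h₁ h' => (hrmax r₁ h₁).trans (htop r hr hrmax r' c' hc' h'), hanti⟩

end KohnertPaper
end

section
/- If D is a hook diagram and D' = D↓^{(r,c)}_{(r−k,c)} is obtained from D by a single Kohnert move at row r that moves a cell down k rows, and D' is covered by D in the Kohnert poset, then k = 1. -/
namespace KohnertPaper

variable {α : Type*}

/-!
If the cell drops `k ≥ 2` rows, column `c` of `D` holds the two cells in rows `r` and `r - 1`.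
Kohnert moves preserve the number of cells in each column, and in `H(r₁,r₂;C)` only the column
`max C` can hold two cells, so `c` is the rightmost occupied column of `D`. Hence the cell in row
`r - k + 1` is the rightmost one of its row: moving it down to row `r - k`, and then the cell of
row `r` down to row `r - k + 1`, passes through a diagram strictly between `D'` and `D`.
-/

theorem _root_.Finset.card_filter_insert_erase {β : Type*} [DecidableEq β] {s : Finset β}
    {x y : β} (p : β → Prop) [DecidablePred p] (hx : x ∈ s) (hy : y ∉ s)
    (hxy : p x ↔ p y) :
    ((insert y (s.erase x)).filter p).card = (s.filter p).card := by
  rw [Finset.filter_insert, Finset.filter_erase]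
  by_cases hpx : p x
  · have hy' : y ∉ (s.filter p).erase x := fun h =>
      hy (Finset.mem_filter.mp (Finset.mem_of_mem_erase h)).1
    rw [if_pos (hxy.mp hpx), Finset.card_insert_of_notMem hy',
      Finset.card_erase_add_one (Finset.mem_filter.mpr ⟨hx, hpx⟩)]
  · rw [if_neg (hxy.not.mp hpx),
      Finset.erase_eq_of_notMem fun h => hpx (Finset.mem_filter.mp h).2]

theorem _root_.Finset.insert_erase_insert_erase {β : Type*} [DecidableEq β] {s : Finset β}
    {a b x : β} (hb : b ∈ s) (hax : a ≠ x) (hbx : b ≠ x) :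
    insert b ((insert a (s.erase b)).erase x) = insert a (s.erase x) := by
  ext y
  simp only [Finset.mem_insert, Finset.mem_erase]
  grind

theorem KMove.ne {D D' : Diagram} (h : KMove D D') : D' ≠ D := by
  obtain ⟨r, c, r', -, -, -, -, hempty, -, rfl⟩ := h
  exact fun h => hempty (h ▸ Finset.mem_insert_self _ _)

def colCount (T : Diagram) (c : ℕ) : ℕ := (T.filter fun p => p.2 = c).card

theorem KMove.colCount_eq {D D' : Diagram} (h : KMove D D') (c : ℕ) :
    colCount D' c = colCount D c := by
  obtain ⟨r, c₀, r', -, -, hcell, -, hempty, -, rfl⟩ := h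
  exact Finset.card_filter_insert_erase _ hcell hempty Iff.rfl

theorem KReach.colCount_eq {S D : Diagram} (h : KReach S D) (c : ℕ) :
    colCount D c = colCount S c := by
  induction h with
  | refl => rfl
  | tail _ hmove ih => rw [hmove.colCount_eq, ih]

theorem colCount_pos_iff {T : Diagram} {c : ℕ} : 0 < colCount T c ↔ ∃ ρ, (ρ, c) ∈ T := by
  simp [colCount, Finset.card_pos, Finset.Nonempty]

theorem one_lt_colCount {T : Diagram} {a b c : ℕ} (ha : (a, c) ∈ T) (hb : (b, c) ∈ T)
    (hab : a ≠ b) : 1 < colCount T c :=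
  Finset.one_lt_card.mpr
    ⟨(a, c), by simpa using ha, (b, c), by simpa using hb, by simpa using hab⟩

section hookSeed

variable {r1 r2 : ℕ} {C : Finset ℕ} {hC : C.Nonempty}

theorem mem_hookSeed_s9 {p : ℕ × ℕ} :
    p ∈ hookSeed r1 r2 C hC ↔
      (p.1 = r2 ∧ p.2 ∈ C) ∨ (r1 ≤ p.1 ∧ p.1 ≤ r2 ∧ p.2 = C.max' hC) := by
  rcases p with ⟨i, j⟩
  simp only [hookSeed, Finset.mem_union, Finset.mem_image, Finset.mem_Icc, Prod.mk.injEq]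
  grind

theorem le_max'_of_mem_hookSeed {i j : ℕ} (h : (i, j) ∈ hookSeed r1 r2 C hC) :
    j ≤ C.max' hC := by
  rcases mem_hookSeed_s9.mp h with ⟨-, hj⟩ | ⟨-, -, rfl⟩
  exacts [C.le_max' j hj, le_rfl]

theorem colCount_hookSeed_le_one {c : ℕ} (hc : c ≠ C.max' hC) :
    colCount (hookSeed r1 r2 C hC) c ≤ 1 := by
  refine Finset.card_le_one.mpr fun p hp q hq => ?_
  simp only [Finset.mem_filter, mem_hookSeed_s9] at hp hq
  exact Prod.ext (by grind) (hp.2.trans hq.2.symm)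

end hookSeed

theorem IsHookDiagram.le_of_two_cells_in_column {D : Diagram} (hD : IsHookDiagram D)
    {a b c ρ c' : ℕ} (ha : (a, c) ∈ D) (hb : (b, c) ∈ D) (hab : a ≠ b)
    (hρ : (ρ, c') ∈ D) : c' ≤ c := by
  obtain ⟨r1, r2, C, hC, -, -, -, hreach⟩ := hD
  have hc : c = C.max' hC := by
    by_contra hc
    have hcount := one_lt_colCount ha hb hab
    rw [hreach.colCount_eq] at hcount
    exact (colCount_hookSeed_le_one hc).not_gt hcount
  obtain ⟨ρ', hρ'⟩ := colCount_pos_iff.mp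
    (hreach.colCount_eq c' ▸ colCount_pos_iff.mpr ⟨ρ, hρ⟩)
  exact hc ▸ le_max'_of_mem_hookSeed hρ'

theorem kMove_factor {D : Diagram} {r c r' : ℕ} (hr' : 1 ≤ r') (hr : r' + 1 < r)
    (hcell : (r, c) ∈ D) (hright : ∀ c', c < c' → (r, c') ∉ D) (hempty : (r', c) ∉ D)
    (hfill : ∀ r₁, r' < r₁ → r₁ < r → (r₁, c) ∈ D)
    (hright' : ∀ c', c < c' → (r' + 1, c') ∉ D) :
    KMove D (insert (r', c) (D.erase (r' + 1, c))) ∧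
      KMove (insert (r', c) (D.erase (r' + 1, c))) (insert (r', c) (D.erase (r, c))) := by
  have hne : ∀ {i j : ℕ}, i ≠ j → (i, c) ≠ (j, c) := fun hij h => hij (Prod.mk.inj h).1
  have hnext : (r' + 1, c) ∈ D := hfill _ (by omega) hr
  refine ⟨⟨r' + 1, c, r', hr', by omega, hnext, hright', hempty, by omega, rfl⟩,
    ⟨r, c, r' + 1, by omega, hr, ?_, ?_, ?_, ?_, ?_⟩⟩
  · exact Finset.mem_insert_of_mem (Finset.mem_erase.mpr ⟨hne (by omega), hcell⟩)
  · simp only [Finset.mem_insert, Finset.mem_erase, Prod.mk.injEq, not_or]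
    exact fun c' hc' => ⟨by omega, fun h => hright c' hc' h.2⟩
  · simp
  · exact fun r₁ h₁ h₂ => Finset.mem_insert_of_mem
      (Finset.mem_erase.mpr ⟨hne (by omega), hfill r₁ (by omega) h₂⟩)
  · exact (Finset.insert_erase_insert_erase hnext (hne (by omega)) (hne (by omega))).symm

theorem stmt_9_general (D : Diagram) (hD : IsHookDiagram D)
    (r c k : ℕ) (hkr : k < r)
    (hcell : (r, c) ∈ D) (hright : ∀ c', c < c' → (r, c') ∉ D)
    (hempty : (r - k, c) ∉ D)
    (hfill : ∀ r₁, r - k < r₁ → r₁ < r → (r₁, c) ∈ D)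
    (D' : Diagram) (hD' : D' = insert (r - k, c) (D.erase (r, c)))
    (hcov : ∀ T : Diagram, KReach D T → KReach T D' → T = D ∨ T = D') :
    k = 1 := by
  have hk : k ≠ 0 := by
    rintro rfl
    exact hempty hcell
  by_contra hk1
  have hright' : ∀ c', c < c' → (r - k + 1, c') ∉ D := fun c' hc' h =>
    have hbelow : (r - 1, c) ∈ D := hfill (r - 1) (by omega) (by omega)
    (hD.le_of_two_cells_in_column hcell hbelow (by omega) h).not_gt hc'
  obtain ⟨hmove₁, hmove₂⟩ :=
    kMove_factor (by omega) (by omega) hcell hright hempty hfill hright'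
  subst hD'
  rcases hcov _ (.single hmove₁) (.single hmove₂) with hT | hT
  exacts [hmove₁.ne hT, hmove₂.ne hT.symm]

/-- If `D` is a hook diagram and `D' = D ↓^{(r,c)}_{(r−k,c)}` is obtained from `D` by a
single Kohnert move moving a cell down `k` rows, and `D'` is covered by `D` in the Kohnert
poset, then `k = 1`. -/
theorem stmt_9 (D : Diagram) (hD : IsHookDiagram D)
    (r c k : ℕ) (hk : 1 ≤ k) (hkr : k < r)
    (hcell : (r, c) ∈ D) (hright : ∀ c', c < c' → (r, c') ∉ D)
    (hempty : (r - k, c) ∉ D)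
    (hfill : ∀ r₁, r - k < r₁ → r₁ < r → (r₁, c) ∈ D)
    (D' : Diagram) (hD' : D' = insert (r - k, c) (D.erase (r, c)))
    (hcov : ∀ T : Diagram, KReach D T → KReach T D' → T = D ∨ T = D') :
    k = 1 :=
  stmt_9_general D hD r c k hkr hcell hright hempty hfill D' hD' hcov

end KohnertPaper
end

section
/- Let D be a diagram all of whose nonempty columns contain exactly one cell. Then the Kohnert posets P(D) and P(D \ {(1,c̃) : c̃ > 0}) are isomorphic; i.e., deleting all cells in row 1 does not change the Kohnert poset up to isomorphism. -/
namespace KohnertPaper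

variable {α : Type*}

/-! Kohnert moves never move a cell of row 1, so when every column has a single cell the
columns occupied in row 1 stay fixed and carry no information: deleting them commutes with
Kohnert moves in both directions, and they are recovered from the row-1 cells of the
starting diagram. -/

def OneCellPerColumn (T : Diagram) : Prop :=
  ∀ c r r', (r, c) ∈ T → (r', c) ∈ T → r = r'

def IsAnchored (C : Finset ℕ) (T : Diagram) : Prop :=
  OneCellPerColumn T ∧ ∀ c ∈ C, (1, c) ∈ T

def dropColumns (C : Finset ℕ) (T : Diagram) : Diagram :=
  T.filter fun p => p.2 ∉ C

lemma mem_dropColumns {C : Finset ℕ} {T : Diagram} {p : ℕ × ℕ} :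
    p ∈ dropColumns C T ↔ p ∈ T ∧ p.2 ∉ C :=
  Finset.mem_filter

lemma dropColumns_insert_erase {C : Finset ℕ} {T : Diagram} {r r' c : ℕ} (hc : c ∉ C) :
    dropColumns C (insert (r', c) (T.erase (r, c))) =
      insert (r', c) ((dropColumns C T).erase (r, c)) := by
  rw [dropColumns, Finset.filter_insert, if_pos hc, Finset.filter_erase, dropColumns]

lemma IsAnchored.not_mem_of_mem {C : Finset ℕ} {T : Diagram} (hT : IsAnchored C T)
    {r c : ℕ} (hr : 1 < r) (hmem : (r, c) ∈ T) : c ∉ C := fun hc =>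
  hr.ne' (hT.1 c r 1 hmem (hT.2 c hc))

lemma KMove.oneCellPerColumn {T T' : Diagram} (h : KMove T T') (hT : OneCellPerColumn T) :
    OneCellPerColumn T' := by
  obtain ⟨r, c, r', -, -, hmem, -, -, -, rfl⟩ := h
  have hcol : ∀ {s c'}, (s, c') ∈ T.erase (r, c) → c' ≠ c := by
    rintro s c' hs rfl
    obtain ⟨hne, hs⟩ := Finset.mem_erase.mp hs
    exact hne (by rw [hT c' s r hs hmem])
  intro c' s s' hs hs'
  rcases Finset.mem_insert.mp hs with hs | hs <;>
    rcases Finset.mem_insert.mp hs' with hs' | hs'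
  · exact (Prod.ext_iff.mp hs).1.trans (Prod.ext_iff.mp hs').1.symm
  · exact absurd (Prod.ext_iff.mp hs).2 (hcol hs')
  · exact absurd (Prod.ext_iff.mp hs').2 (hcol hs)
  · exact hT c' s s' (Finset.mem_of_mem_erase hs) (Finset.mem_of_mem_erase hs')

lemma KMove.mem_of_mem_row_one {T T' : Diagram} (h : KMove T T') {c : ℕ} (hc : (1, c) ∈ T) :
    (1, c) ∈ T' := by
  obtain ⟨r, c₀, r', h1, hr, -, -, -, -, rfl⟩ := h
  refine Finset.mem_insert_of_mem (Finset.mem_erase.mpr ⟨?_, hc⟩)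
  simp only [ne_eq, Prod.mk.injEq, not_and]
  omega

lemma KReach.isAnchored {C : Finset ℕ} {T T' : Diagram} (h : KReach T T')
    (hT : IsAnchored C T) : IsAnchored C T' := by
  induction h with
  | refl => exact hT
  | tail _ hm ih =>
    exact ⟨hm.oneCellPerColumn ih.1, fun c hc => hm.mem_of_mem_row_one (ih.2 c hc)⟩

lemma KMove.map_dropColumns {C : Finset ℕ} {T T' : Diagram} (h : KMove T T')
    (hT : IsAnchored C T) : KMove (dropColumns C T) (dropColumns C T') := by
  obtain ⟨r, c, r', h1, hr, hmem, hright, hempty, hbetween, rfl⟩ := h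
  have hc : c ∉ C := hT.not_mem_of_mem (by omega) hmem
  refine ⟨r, c, r', h1, hr, mem_dropColumns.mpr ⟨hmem, hc⟩,
    fun c' hc' hin => hright c' hc' (mem_dropColumns.mp hin).1,
    fun hin => hempty (mem_dropColumns.mp hin).1,
    fun r₁ h₁ h₂ => mem_dropColumns.mpr ⟨hbetween r₁ h₁ h₂, hc⟩,
    dropColumns_insert_erase hc⟩

lemma KMove.lift_dropColumns {C : Finset ℕ} {T S' : Diagram}
    (h : KMove (dropColumns C T) S') (hT : IsAnchored C T) :
    ∃ T', KMove T T' ∧ dropColumns C T' = S' := by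
  obtain ⟨r, c, r', h1, hr, hmem, hright, hempty, hbetween, rfl⟩ := h
  obtain ⟨hmem, hc⟩ := mem_dropColumns.mp hmem
  refine ⟨insert (r', c) (T.erase (r, c)), ⟨r, c, r', h1, hr, hmem, ?_,
    fun hin => hempty (mem_dropColumns.mpr ⟨hin, hc⟩),
    fun r₁ h₁ h₂ => (mem_dropColumns.mp (hbetween r₁ h₁ h₂)).1, rfl⟩,
    dropColumns_insert_erase hc⟩
  -- a cell to the right of `(r, c)` cannot sit in a deleted column, whose only cell is in row 1
  intro c' hc' hin
  exact hright c' hc' (mem_dropColumns.mpr ⟨hin, hT.not_mem_of_mem (by omega) hin⟩)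

lemma KReach.map_dropColumns {C : Finset ℕ} {T T' : Diagram} (h : KReach T T')
    (hT : IsAnchored C T) : KReach (dropColumns C T) (dropColumns C T') := by
  induction h with
  | refl => exact .refl
  | tail hr hm ih => exact ih.tail (hm.map_dropColumns (KReach.isAnchored hr hT))

lemma KReach.lift_dropColumns {C : Finset ℕ} {T S : Diagram}
    (h : KReach (dropColumns C T) S) (hT : IsAnchored C T) :
    ∃ T', KReach T T' ∧ dropColumns C T' = S := by
  induction h with
  | refl => exact ⟨T, .refl, rfl⟩
  | tail _ hm ih =>
    obtain ⟨T₂, hr, rfl⟩ := ih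
    obtain ⟨T₃, hm', hT₃⟩ := hm.lift_dropColumns (KReach.isAnchored hr hT)
    exact ⟨T₃, hr.tail hm', hT₃⟩

lemma IsAnchored.filter_mem_columns {C : Finset ℕ} {T : Diagram} (hT : IsAnchored C T) :
    T.filter (fun p => p.2 ∈ C) = C.image fun c => (1, c) := by
  ext ⟨r, c⟩
  simp only [Finset.mem_filter, Finset.mem_image, Prod.mk.injEq]
  constructor
  · rintro ⟨hmem, hc⟩
    exact ⟨c, hc, (hT.1 c r 1 hmem (hT.2 c hc)).symm, rfl⟩
  · rintro ⟨c, hc, rfl, rfl⟩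
    exact ⟨hT.2 c hc, hc⟩

lemma IsAnchored.eq_of_dropColumns_eq {C : Finset ℕ} {T₁ T₂ : Diagram}
    (h₁ : IsAnchored C T₁) (h₂ : IsAnchored C T₂)
    (h : dropColumns C T₁ = dropColumns C T₂) : T₁ = T₂ := by
  rw [← Finset.filter_union_filter_not_eq (fun p => p.2 ∈ C) T₁,
    ← Finset.filter_union_filter_not_eq (fun p => p.2 ∈ C) T₂,
    h₁.filter_mem_columns, h₂.filter_mem_columns]
  exact congrArg _ h

theorem stmt_11_general (D : Diagram)
    (hcol : ∀ c r r', (r, c) ∈ D → (r', c) ∈ D → r = r') :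
    ∃ f : Diagram → Diagram,
      (∀ T, KReach D T → KReach (D.filter fun p => p.1 ≠ 1) (f T)) ∧
      (∀ T1 T2, KReach D T1 → KReach D T2 → f T1 = f T2 → T1 = T2) ∧
      (∀ S, KReach (D.filter fun p => p.1 ≠ 1) S → ∃ T, KReach D T ∧ f T = S) ∧
      (∀ T1 T2, KReach D T1 → KReach D T2 →
        (KReach T1 T2 ↔ KReach (f T1) (f T2))) := by
  set C := (D.filter fun p => p.1 = 1).image Prod.snd
  have hC : IsAnchored C D := ⟨hcol, fun c hc => by
    obtain ⟨⟨r, c⟩, hp, rfl⟩ := Finset.mem_image.mp hc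
    obtain ⟨hp, rfl : r = 1⟩ := Finset.mem_filter.mp hp
    exact hp⟩
  have hdrop : dropColumns C D = D.filter fun p => p.1 ≠ 1 := by
    refine Finset.filter_congr fun ⟨r, c⟩ hp => ?_
    simp only [C, Finset.mem_image, Finset.mem_filter, not_exists, not_and, Prod.forall]
    constructor
    · exact fun h hr => h r c ⟨hp, hr⟩ rfl
    · rintro hr r' c ⟨hp', rfl⟩ rfl
      exact hr (hcol c r 1 hp hp')
  have hreach {T : Diagram} (hT : KReach D T) : IsAnchored C T := hT.isAnchored hC
  refine ⟨dropColumns C, fun T hT => hdrop ▸ hT.map_dropColumns hC,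
    fun T₁ T₂ h₁ h₂ => (hreach h₁).eq_of_dropColumns_eq (hreach h₂),
    fun S hS => (hdrop ▸ hS).lift_dropColumns hC, fun T₁ T₂ h₁ h₂ => ⟨?_, ?_⟩⟩
  · exact fun h => h.map_dropColumns (hreach h₁)
  · intro h
    obtain ⟨T, hT, hdropT⟩ := h.lift_dropColumns (hreach h₁)
    rwa [← (hT.isAnchored (hreach h₁)).eq_of_dropColumns_eq (hreach h₂) hdropT]

/-- If every nonempty column of `D` contains exactly one cell, then `P(D)` is isomorphic to
`P(D \ row 1)`. -/
theorem stmt_11 (D : Diagram) (hD : ∀ p ∈ D, 1 ≤ p.1 ∧ 1 ≤ p.2)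
    (hcol : ∀ c r r', (r, c) ∈ D → (r', c) ∈ D → r = r') :
    ∃ f : Diagram → Diagram,
      (∀ T, KReach D T → KReach (D.filter fun p => p.1 ≠ 1) (f T)) ∧
      (∀ T1 T2, KReach D T1 → KReach D T2 → f T1 = f T2 → T1 = T2) ∧
      (∀ S, KReach (D.filter fun p => p.1 ≠ 1) S → ∃ T, KReach D T ∧ f T = S) ∧
      (∀ T1 T2, KReach D T1 → KReach D T2 →
        (KReach T1 T2 ↔ KReach (f T1) (f T2))) :=
  stmt_11_general D hcol

end KohnertPaper
end
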